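/- arXiv:2004.10739 — 9 statements merged into one kernel-verified Lean document; each statement's English description precedes it below -/
import Mathlib

section
/- Let k be a field and let R = k[x,x⁻¹][y,z,u] (Laurent in x, polynomial in y,z,u). For P ∈ k[z] and n ≥ 1, define v = y + xⁿ(xz + y(yu + P(z))). Then the k[x,x⁻¹]-algebra endomorphism of R sending y ↦ v, z ↦ xz + y(yu + P(z)), u ↦ u/x − (P(z + y(yu+P(z))/x) − P(z))/(xy) is a well-defined k[x,x⁻¹]-algebra automorphism of R. -/
noncomputable section
open MvPolynomial

/-- The ring `k[x,x⁻¹][y,z,u]`: multivariate polynomials in `y = X 0`, `z = X 1`,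
`u = X 2` over the Laurent polynomial ring `k[x,x⁻¹]`. -/
abbrev R0 (k : Type) [Field k] := MvPolynomial (Fin 3) (LaurentPolynomial k)

/-- The image of `x` in `R0 k`. -/
def tx (k : Type) [Field k] : R0 k := MvPolynomial.C (LaurentPolynomial.T 1)

/-- The image of `x⁻¹` in `R0 k`. -/
def txinv (k : Type) [Field k] : R0 k := MvPolynomial.C (LaurentPolynomial.T (-1))

lemma tx_mul_txinv (k : Type) [Field k] : tx k * txinv k = 1 := by
  rw [tx, txinv, ← map_mul, ← LaurentPolynomial.T_add]
  norm_num

lemma dvd_aeval_diff {k : Type} [Field k] (P : Polynomial k) (a b : R0 k) :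
    ∃ c, Polynomial.aeval (a + b) P - Polynomial.aeval a P = b * c := by
  have h : ((a + b) - a) ∣ (P.map (algebraMap k (R0 k))).eval (a + b) -
      (P.map (algebraMap k (R0 k))).eval a := Polynomial.sub_dvd_eval_sub _ _ _
  rw [add_sub_cancel_left] at h
  obtain ⟨c, hc⟩ := h
  refine ⟨c, ?_⟩
  rwa [Polynomial.eval_map, Polynomial.eval_map, ← Polynomial.aeval_def,
    ← Polynomial.aeval_def] at hc

lemma yprime_ne {k : Type} [Field k] (n : ℕ) : (X 0 - (tx k) ^ n * X 1 : R0 k) ≠ 0 := by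
  intro h
  have := congrArg (coeff (Finsupp.single 0 1)) h
  simp [tx, ← map_pow, coeff_C_mul, coeff_X', Finsupp.single_eq_single_iff] at this

lemma haev {k : Type} [Field k] (F : R0 k →ₐ[LaurentPolynomial k] R0 k) (P : Polynomial k)
    (r : R0 k) : F (Polynomial.aeval r P) = Polynomial.aeval (F r) P :=
  (Polynomial.aeval_algHom_apply (F.restrictScalars k) r P).symm

set_option maxHeartbeats 1000000 in
/-- for `P ∈ k[z]` and `n ≥ 1`, with
`v = y + xⁿ(xz + y(yu + P(z)))`, the numerator `P(z + y(yu+P(z))/x) − P(z)` is divisible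
by `y`, say equal to `y·q`, and there is a `k[x,x⁻¹]`-algebra automorphism of
`k[x,x⁻¹][y,z,u]` sending `y ↦ v`, `z ↦ xz + y(yu + P(z))` and
`u ↦ x⁻¹·u − x⁻¹·q  ( = u/x − (P(z + y(yu+P(z))/x) − P(z))/(xy) )`. -/
theorem stmt0 (k : Type) [Field k] (P : Polynomial k) (n : ℕ) (hn : 1 ≤ n) :
    ∃ q : R0 k,
      Polynomial.aeval ((X 1 : R0 k) + X 0 * (X 0 * X 2 + Polynomial.aeval (X 1 : R0 k) P)
          * txinv k) P - Polynomial.aeval (X 1 : R0 k) P = X 0 * q ∧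
      ∃ φ : R0 k ≃ₐ[LaurentPolynomial k] R0 k,
        φ (X 0) = X 0 + (tx k) ^ n *
            (tx k * X 1 + X 0 * (X 0 * X 2 + Polynomial.aeval (X 1 : R0 k) P)) ∧
        φ (X 1) = tx k * X 1 + X 0 * (X 0 * X 2 + Polynomial.aeval (X 1 : R0 k) P) ∧
        φ (X 2) = txinv k * X 2 - txinv k * q := by
  classical
  have htt' : tx k * txinv k = 1 := tx_mul_txinv k
  set t := tx k with ht
  set t' := txinv k with ht'
  set w : R0 k := X 0 * X 2 + Polynomial.aeval (X 1 : R0 k) P with hw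
  set s : R0 k := t * X 1 + X 0 * w with hs
  obtain ⟨c, hc0⟩ := dvd_aeval_diff P (X 1) (X 0 * w * t')
  set q : R0 k := w * t' * c with hqdef
  have hq : Polynomial.aeval ((X 1 : R0 k) + X 0 * w * t') P -
      Polynomial.aeval (X 1 : R0 k) P = X 0 * q := by
    rw [hqdef]; linear_combination hc0
  -- inverse data
  set y' : R0 k := X 0 - t ^ n * X 1 with hy'
  have hy'ne : y' ≠ 0 := by rw [hy', ht]; exact yprime_ne n
  set w' : R0 k := t * (y' * X 2) + Polynomial.aeval (t' * X 1 : R0 k) P with hw'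
  set z' : R0 k := t' * X 1 - t' * (y' * w') with hz'
  obtain ⟨c2, hc2⟩ := dvd_aeval_diff P z' (y' * (t' * w'))
  have hz'' : z' + y' * (t' * w') = t' * X 1 := by rw [hz']; ring
  rw [hz''] at hc2
  set q' : R0 k := t' * w' * c2 with hq'def
  have hq2 : Polynomial.aeval (t' * X 1 : R0 k) P - Polynomial.aeval z' P = y' * q' := by
    rw [hq'def]; linear_combination hc2
  -- the two algebra homomorphisms
  set f : Fin 3 → R0 k := ![X 0 + t ^ n * s, s, t' * X 2 - t' * q] with hf
  set g : Fin 3 → R0 k := ![y', z', t * X 2 + q'] with hg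
  set φ : R0 k →ₐ[LaurentPolynomial k] R0 k := aeval f with hφdef
  set ψ : R0 k →ₐ[LaurentPolynomial k] R0 k := aeval g with hψdef
  clear_value t t' w s q y' w' z' q' f g φ ψ
  have hFC : ∀ (F : R0 k →ₐ[LaurentPolynomial k] R0 k) (a : LaurentPolynomial k),
      F (MvPolynomial.C a) = MvPolynomial.C a := fun F a => by
    rw [← MvPolynomial.algebraMap_eq]; exact F.commutes a
  have hφ0 : φ (X 0) = X 0 + t ^ n * s := by rw [hφdef, aeval_X, hf]; simp
  have hφ1 : φ (X 1) = s := by rw [hφdef, aeval_X, hf]; simp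
  have hφ2 : φ (X 2) = t' * X 2 - t' * q := by rw [hφdef, aeval_X, hf]; simp
  have hψ0 : ψ (X 0) = y' := by rw [hψdef, aeval_X, hg]; simp
  have hψ1 : ψ (X 1) = z' := by rw [hψdef, aeval_X, hg]; simp
  have hψ2 : ψ (X 2) = t * X 2 + q' := by rw [hψdef, aeval_X, hg]; simp
  have hφt : φ t = t := by rw [ht, tx]; exact hFC φ _
  have hφt' : φ t' = t' := by rw [ht', txinv]; exact hFC φ _
  have hψt : ψ t = t := by rw [ht, tx]; exact hFC ψ _
  have hψt' : ψ t' = t' := by rw [ht', txinv]; exact hFC ψ _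
  -- computations for ψ ∘ φ
  have hψw : ψ w = w' := by
    rw [hw]
    simp only [map_add, map_mul, hψ0, hψ2, haev, hψ1]
    rw [hw']
    linear_combination -hq2
  have hψs : ψ s = X 1 := by
    rw [hs]
    simp only [map_add, map_mul, hψt, hψ1, hψ0, hψw]
    rw [hz']
    linear_combination (X 1 - y' * w') * htt'
  have hψq : ψ q = q' := by
    have h3 := congrArg ψ hq
    simp only [map_sub, map_mul, map_add, haev, hψ0, hψ1, hψt', hψw] at h3
    have harg : z' + y' * w' * t' = t' * X 1 := by rw [hz']; ring
    rw [harg, hq2] at h3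
    exact mul_left_cancel₀ hy'ne h3.symm
  -- computations for φ ∘ ψ
  have hφy' : φ y' = X 0 := by
    rw [hy']
    simp only [map_sub, map_mul, map_pow, hφt, hφ0, hφ1]
    ring
  have harg2 : t' * s = X 1 + X 0 * w * t' := by rw [hs]; linear_combination X 1 * htt'
  have hφw' : φ w' = w := by
    rw [hw']
    simp only [map_add, map_mul, hφy', hφ2, haev, hφt, hφt', hφ1]
    rw [harg2]
    linear_combination hq + (X 0 * X 2 - X 0 * q) * htt' - hw
  have hφz' : φ z' = X 1 := by
    rw [hz']
    simp only [map_sub, map_mul, hφt', hφ1, hφy', hφw']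
    rw [hs]
    linear_combination X 1 * htt'
  have hφq' : φ q' = q := by
    have h3 := congrArg φ hq2
    simp only [map_sub, map_mul, haev, hφt', hφ1, hφy', hφz'] at h3
    rw [harg2, hq] at h3
    exact (mul_left_cancel₀ (X_ne_zero 0) h3).symm
  -- the compositions are the identity
  have hco1 : φ.comp ψ = AlgHom.id (LaurentPolynomial k) (R0 k) := by
    apply MvPolynomial.algHom_ext
    intro i
    fin_cases i
    · show (φ.comp ψ) (X 0) = AlgHom.id (LaurentPolynomial k) (R0 k) (X 0)
      simp only [AlgHom.comp_apply, AlgHom.id_apply, hψ0, hφy']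
    · show (φ.comp ψ) (X 1) = AlgHom.id (LaurentPolynomial k) (R0 k) (X 1)
      simp only [AlgHom.comp_apply, AlgHom.id_apply, hψ1, hφz']
    · show (φ.comp ψ) (X 2) = AlgHom.id (LaurentPolynomial k) (R0 k) (X 2)
      simp only [AlgHom.comp_apply, AlgHom.id_apply, hψ2, map_add, map_mul, hφt, hφ2, hφq']
      linear_combination (X 2 - q) * htt'
  have hco2 : ψ.comp φ = AlgHom.id (LaurentPolynomial k) (R0 k) := by
    apply MvPolynomial.algHom_ext
    intro i
    fin_cases i
    · show (ψ.comp φ) (X 0) = AlgHom.id (LaurentPolynomial k) (R0 k) (X 0)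
      simp only [AlgHom.comp_apply, AlgHom.id_apply, hφ0, map_add, map_mul, map_pow,
        hψt, hψ0, hψs]
      rw [hy']; ring
    · show (ψ.comp φ) (X 1) = AlgHom.id (LaurentPolynomial k) (R0 k) (X 1)
      simp only [AlgHom.comp_apply, AlgHom.id_apply, hφ1, hψs]
    · show (ψ.comp φ) (X 2) = AlgHom.id (LaurentPolynomial k) (R0 k) (X 2)
      simp only [AlgHom.comp_apply, AlgHom.id_apply, hφ2, map_sub, map_mul, hψt', hψ2, hψq]
      linear_combination X 2 * htt'
  refine ⟨q, hq, AlgEquiv.ofAlgHom φ ψ hco1 hco2, ?_, ?_, ?_⟩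
  · simpa using hφ0
  · simpa using hφ1
  · simpa using hφ2
end
end

section
/- Let R be a commutative ring with unity, m ≥ 1 an integer, a ∈ R a non-zero-divisor, and f, Q ∈ R[X]. Then the polynomial v = x + a·Q(aᵐ·y + f(x)) is an R-variable of R[x,y]; that is, there exists g ∈ R[x,y] such that R[v,g] = R[x,y] (equivalently, an R-algebra automorphism of R[x,y] sends x to v). -/
noncomputable section
open MvPolynomial

theorem my_sub_dvd_aeval_sub {R A : Type*} [CommRing R] [CommRing A] [Algebra R A]
    (u w : A) (p : Polynomial R) :
    u - w ∣ Polynomial.aeval u p - Polynomial.aeval w p := by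
  rw [Polynomial.aeval_def, Polynomial.aeval_def, ← Polynomial.eval_map, ← Polynomial.eval_map]
  exact Polynomial.sub_dvd_eval_sub u w _

theorem my_sub_dvd_comp_sub {R : Type*} [CommRing R] (u w p : Polynomial R) :
    u - w ∣ p.comp u - p.comp w := by
  simpa [Polynomial.comp_eq_aeval] using my_sub_dvd_aeval_sub u w p

theorem my_dvd_comp {R : Type*} [CommRing R] {a : R} {k : ℕ} {p : Polynomial R}
    (r : Polynomial R) (h : Polynomial.C a ^ k ∣ p) : Polynomial.C a ^ k ∣ p.comp r := by
  obtain ⟨t, ht⟩ := h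
  exact ⟨t.comp r, by simp [ht, Polynomial.mul_comp, Polynomial.pow_comp]⟩

theorem my_left_inv {R : Type*} [CommRing R] (a : R) (γ : Polynomial R)
    (hγ : Polynomial.C a ∣ γ - Polynomial.X) (k : ℕ) :
    ∃ b : Polynomial R, Polynomial.C a ∣ b - Polynomial.X ∧
      Polynomial.C a ^ (k + 1) ∣ b.comp γ - Polynomial.X := by
  induction k with
  | zero => exact ⟨Polynomial.X, by simp, by simpa using hγ⟩
  | succ k ih =>
    obtain ⟨b, hb1, hb2⟩ := ih
    obtain ⟨s, hs⟩ := hb2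
    have h4 : Polynomial.C a ∣ Polynomial.X - γ := by simpa [neg_sub] using hγ.neg_right
    refine ⟨b - Polynomial.C a ^ (k + 1) * s, ?_, ?_⟩
    · have h1 : Polynomial.C a ∣ Polynomial.C a ^ (k + 1) * s :=
        dvd_mul_of_dvd_left (dvd_pow_self _ (Nat.succ_ne_zero k)) s
      have he : b - Polynomial.C a ^ (k + 1) * s - Polynomial.X
          = (b - Polynomial.X) - Polynomial.C a ^ (k + 1) * s := by ring
      rw [he]
      exact dvd_sub hb1 h1
    · have hcomp : (b - Polynomial.C a ^ (k + 1) * s).comp γ - Polynomial.X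
          = (b.comp γ - Polynomial.X) - Polynomial.C a ^ (k + 1) * s.comp γ := by
        simp only [Polynomial.sub_comp, Polynomial.mul_comp, Polynomial.pow_comp,
          Polynomial.C_comp]
        ring
      rw [hcomp, hs, ← mul_sub, pow_succ]
      have h3 : Polynomial.X - γ ∣ s - s.comp γ := by
        simpa using my_sub_dvd_comp_sub (Polynomial.X : Polynomial R) γ s
      exact mul_dvd_mul_left _ (h4.trans h3)

/-- two-sided compositional inverse of `X + C a * q` modulo `C a ^ m` -/
theorem my_two_sided {R : Type*} [CommRing R] (a : R) (m : ℕ) (q : Polynomial R) :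
    ∃ b : Polynomial R,
      Polynomial.C a ^ m ∣ b.comp (Polynomial.X + Polynomial.C a * q) - Polynomial.X ∧
      Polynomial.C a ^ m ∣ (Polynomial.X + Polynomial.C a * q).comp b - Polynomial.X := by
  rcases m with _ | n
  · exact ⟨Polynomial.X, by simpa using one_dvd _, by simpa using one_dvd _⟩
  set α := Polynomial.X + Polynomial.C a * q with hα
  have hq : Polynomial.C a ∣ α - Polynomial.X := by simp [hα]
  obtain ⟨b, hb1, hb2⟩ := my_left_inv a α hq n
  obtain ⟨c, -, hc2⟩ := my_left_inv a b hb1 n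
  refine ⟨b, hb2, ?_⟩
  have hstep1 : Polynomial.C a ^ (n + 1) ∣ α - c := by
    have e1 : Polynomial.C a ^ (n + 1) ∣ α - (c.comp b).comp α := by
      have he : α - (c.comp b).comp α = -((c.comp b - Polynomial.X).comp α) := by
        simp [Polynomial.sub_comp]
      rw [he]
      exact (my_dvd_comp α hc2).neg_right
    have e2 : Polynomial.C a ^ (n + 1) ∣ (c.comp b).comp α - c := by
      rw [Polynomial.comp_assoc]
      have h5 := my_sub_dvd_comp_sub (b.comp α) Polynomial.X c
      rw [Polynomial.comp_X] at h5
      exact hb2.trans h5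
    have he2 : α - c = (α - (c.comp b).comp α) + ((c.comp b).comp α - c) := by ring
    rw [he2]
    exact dvd_add e1 e2
  have he3 : α.comp b - Polynomial.X = (α - c).comp b + (c.comp b - Polynomial.X) := by
    simp [Polynomial.sub_comp]
  rw [he3]
  exact dvd_add (my_dvd_comp b hstep1) hc2

theorem my_aeval_dvd {R A : Type*} [CommRing R] [CommRing A] [Algebra R A] (u : A)
    {a : R} {k : ℕ} {r : Polynomial R} (h : Polynomial.C a ^ k ∣ r) :
    (algebraMap R A a) ^ k ∣ Polynomial.aeval u r := by
  obtain ⟨t, ht⟩ := h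
  exact ⟨Polynomial.aeval u t, by simp [ht]⟩

theorem my_C_mem_nzd {R σ : Type*} [CommRing R] {a : R} (ha : a ∈ nonZeroDivisors R) :
    (MvPolynomial.C a : MvPolynomial σ R) ∈ nonZeroDivisors (MvPolynomial σ R) := by
  rw [mem_nonZeroDivisors_iff_right]
  intro z hz
  ext d
  rw [mul_comm] at hz
  have h := congrArg (MvPolynomial.coeff d) hz
  rw [MvPolynomial.coeff_C_mul] at h
  simpa using (mem_nonZeroDivisors_iff_right.mp ha) _ (by simpa [mul_comm] using h)

/-- if `R` is a commutative ring, `m ≥ 1`, `a ∈ R` a non-zero-divisor and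
`f, Q ∈ R[X]`, then `v = x + a·Q(aᵐ·y + f(x))` is an `R`-variable of `R[x,y]`:
there is an `R`-algebra automorphism of `R[x,y]` sending `x` to `v`.
Here `R[x,y]` is `MvPolynomial (Fin 2) R` with `x = X 0`, `y = X 1`. -/
theorem stmt1 (R : Type) [CommRing R] (m : ℕ) (hm : 1 ≤ m)
    (a : R) (ha : a ∈ nonZeroDivisors R) (f Q : Polynomial R) :
    ∃ φ : MvPolynomial (Fin 2) R ≃ₐ[R] MvPolynomial (Fin 2) R,
      φ (X 0) = X 0 + C a * Polynomial.aeval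
        ((C a) ^ m * X 1 + Polynomial.aeval (X 0 : MvPolynomial (Fin 2) R) f) Q := by
  classical
  obtain ⟨b, hba, hab⟩ := my_two_sided a m (Q.comp f)
  obtain ⟨α, hαdef⟩ : ∃ p : Polynomial R,
      p = Polynomial.X + Polynomial.C a * (Q.comp f) := ⟨_, rfl⟩
  obtain ⟨F, hFdef⟩ : ∃ p : Polynomial R, p = f.comp b := ⟨_, rfl⟩
  rw [← hαdef] at hba hab
  obtain ⟨w, hw⟩ : ∃ p : MvPolynomial (Fin 2) R,
      p = (C a) ^ m * X 1 + Polynomial.aeval (X 0 : MvPolynomial (Fin 2) R) f := ⟨_, rfl⟩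
  obtain ⟨V, hV⟩ : ∃ p : MvPolynomial (Fin 2) R,
      p = X 0 + C a * Polynomial.aeval w Q := ⟨_, rfl⟩
  obtain ⟨Wt, hWt⟩ : ∃ p : MvPolynomial (Fin 2) R,
      p = (C a) ^ m * X 1 + Polynomial.aeval (X 0 : MvPolynomial (Fin 2) R) F := ⟨_, rfl⟩
  obtain ⟨xt, hxt⟩ : ∃ p : MvPolynomial (Fin 2) R,
      p = X 0 - C a * Polynomial.aeval Wt Q := ⟨_, rfl⟩
  -- (A): C a ^ m ∣ w - F(V)
  have hA : (C a : MvPolynomial (Fin 2) R) ^ m ∣ w - Polynomial.aeval V F := by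
    have h1 : Polynomial.C a ^ m ∣ F.comp α - f := by
      have hd := my_sub_dvd_comp_sub (b.comp α) Polynomial.X f
      rw [Polynomial.comp_X] at hd
      have hFc : F.comp α = f.comp (b.comp α) := by rw [hFdef, Polynomial.comp_assoc]
      rw [hFc]
      exact hba.trans hd
    have h2 : (C a : MvPolynomial (Fin 2) R) ^ m ∣
        Polynomial.aeval (X 0 : MvPolynomial (Fin 2) R) (F.comp α - f) := by
      simpa [MvPolynomial.algebraMap_eq] using
        my_aeval_dvd (X 0 : MvPolynomial (Fin 2) R) h1
    have hax : Polynomial.aeval (X 0 : MvPolynomial (Fin 2) R) α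
        = X 0 + C a * Polynomial.aeval
            (Polynomial.aeval (X 0 : MvPolynomial (Fin 2) R) f) Q := by
      simp [hαdef, Polynomial.aeval_comp, MvPolynomial.algebraMap_eq]
    have h3 : (C a : MvPolynomial (Fin 2) R) ^ m ∣
        Polynomial.aeval (Polynomial.aeval (X 0 : MvPolynomial (Fin 2) R) α) F
          - Polynomial.aeval V F := by
      refine Dvd.dvd.trans ?_ (my_sub_dvd_aeval_sub _ _ F)
      rw [hax, hV]
      have h4 : (C a : MvPolynomial (Fin 2) R) ^ m ∣
          Polynomial.aeval (Polynomial.aeval (X 0 : MvPolynomial (Fin 2) R) f) Q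
            - Polynomial.aeval w Q := by
        refine Dvd.dvd.trans ?_ (my_sub_dvd_aeval_sub _ _ Q)
        exact ⟨-X 1, by rw [hw]; ring⟩
      obtain ⟨t, ht⟩ := h4
      exact ⟨C a * t, by linear_combination (C a : MvPolynomial (Fin 2) R) * ht⟩
    have hdec : w - Polynomial.aeval V F
        = ((C a) ^ m * X 1
            - Polynomial.aeval (X 0 : MvPolynomial (Fin 2) R) (F.comp α - f))
          + (Polynomial.aeval (Polynomial.aeval (X 0 : MvPolynomial (Fin 2) R) α) F
            - Polynomial.aeval V F) := by
      rw [map_sub, Polynomial.aeval_comp, hw]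
      ring
    rw [hdec]
    exact dvd_add (dvd_sub (dvd_mul_right _ _) h2) h3
  obtain ⟨g, hg⟩ := hA
  -- (B): C a ^ m ∣ F(x) - f(xt)
  have hB : (C a : MvPolynomial (Fin 2) R) ^ m ∣
      Polynomial.aeval (X 0 : MvPolynomial (Fin 2) R) F - Polynomial.aeval xt f := by
    obtain ⟨β, hβdef⟩ : ∃ p : Polynomial R,
        p = Polynomial.X - Polynomial.C a * (Q.comp F) := ⟨_, rfl⟩
    have hbβ : b - β = α.comp b - Polynomial.X := by
      rw [hβdef, hαdef]
      simp only [Polynomial.add_comp, Polynomial.X_comp, Polynomial.mul_comp,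
        Polynomial.C_comp, Polynomial.comp_assoc, hFdef]
      ring
    have h1 : Polynomial.C a ^ m ∣ F - f.comp β := by
      have hd := my_sub_dvd_comp_sub b β f
      have hFb : (F : Polynomial R) = f.comp b := hFdef
      rw [← hFb] at hd
      exact (hbβ ▸ hab : Polynomial.C a ^ m ∣ b - β).trans hd
    have h2 : (C a : MvPolynomial (Fin 2) R) ^ m ∣
        Polynomial.aeval (X 0 : MvPolynomial (Fin 2) R) (F - f.comp β) := by
      simpa [MvPolynomial.algebraMap_eq] using
        my_aeval_dvd (X 0 : MvPolynomial (Fin 2) R) h1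
    have hbx : Polynomial.aeval (X 0 : MvPolynomial (Fin 2) R) β
        = X 0 - C a * Polynomial.aeval
            (Polynomial.aeval (X 0 : MvPolynomial (Fin 2) R) F) Q := by
      simp [hβdef, Polynomial.aeval_comp, MvPolynomial.algebraMap_eq]
    have h3 : (C a : MvPolynomial (Fin 2) R) ^ m ∣
        Polynomial.aeval (Polynomial.aeval (X 0 : MvPolynomial (Fin 2) R) β) f
          - Polynomial.aeval xt f := by
      refine Dvd.dvd.trans ?_ (my_sub_dvd_aeval_sub _ _ f)
      rw [hbx, hxt]
      have h4 : (C a : MvPolynomial (Fin 2) R) ^ m ∣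
          Polynomial.aeval Wt Q - Polynomial.aeval
            (Polynomial.aeval (X 0 : MvPolynomial (Fin 2) R) F) Q := by
        refine Dvd.dvd.trans ?_ (my_sub_dvd_aeval_sub _ _ Q)
        exact ⟨X 1, by rw [hWt]; ring⟩
      obtain ⟨t, ht⟩ := h4
      exact ⟨C a * t, by linear_combination (C a : MvPolynomial (Fin 2) R) * ht⟩
    have hdec : Polynomial.aeval (X 0 : MvPolynomial (Fin 2) R) F - Polynomial.aeval xt f
        = Polynomial.aeval (X 0 : MvPolynomial (Fin 2) R) (F - f.comp β)
          + (Polynomial.aeval (Polynomial.aeval (X 0 : MvPolynomial (Fin 2) R) β) f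
            - Polynomial.aeval xt f) := by
      rw [map_sub, Polynomial.aeval_comp]
      ring
    rw [hdec]
    exact dvd_add h2 h3
  obtain ⟨G, hG⟩ := hB
  obtain ⟨ψ, hψdef⟩ : ∃ h : MvPolynomial (Fin 2) R →ₐ[R] MvPolynomial (Fin 2) R,
      h = MvPolynomial.aeval ![V, g] := ⟨_, rfl⟩
  obtain ⟨χ, hχdef⟩ : ∃ h : MvPolynomial (Fin 2) R →ₐ[R] MvPolynomial (Fin 2) R,
      h = MvPolynomial.aeval ![xt, X 1 + G] := ⟨_, rfl⟩
  have hcancel : ∀ p r : MvPolynomial (Fin 2) R,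
      (C a : MvPolynomial (Fin 2) R) ^ m * p = (C a) ^ m * r → p = r := fun p r h =>
    (mul_cancel_left_mem_nonZeroDivisors (pow_mem (my_C_mem_nzd ha) m)).mp h
  have hψx : ψ (X 0) = V := by simp [hψdef]
  have hψy : ψ (X 1) = g := by simp [hψdef]
  have hχx : χ (X 0) = xt := by simp [hχdef]
  have hχy : χ (X 1) = X 1 + G := by simp [hχdef]
  have haev : ∀ (h : MvPolynomial (Fin 2) R →ₐ[R] MvPolynomial (Fin 2) R)
      (u : MvPolynomial (Fin 2) R) (p : Polynomial R),
      h (Polynomial.aeval u p) = Polynomial.aeval (h u) p := fun h u p =>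
    (Polynomial.aeval_algHom_apply h u p).symm
  have hCa : ∀ (h : MvPolynomial (Fin 2) R →ₐ[R] MvPolynomial (Fin 2) R),
      h (C a) = C a := fun h => h.commutes a
  -- χ computations
  have hχw : χ w = Wt := by
    rw [hw, hWt]
    rw [map_add, map_mul, map_pow, hCa, hχy, haev, hχx]
    linear_combination -hG
  have hχV : χ V = X 0 := by
    rw [hV, map_add, map_mul, hCa, haev, hχx, hχw, hxt]
    ring
  have hχg : χ g = X 1 := by
    apply hcancel
    have h1 := congrArg χ hg
    rw [map_sub, map_mul, map_pow, hCa, haev, hχV, hχw] at h1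
    rw [← h1, hWt]
    ring
  -- ψ computations
  have hψWt : ψ Wt = w := by
    rw [hWt, map_add, map_mul, map_pow, hCa, hψy, haev, hψx]
    linear_combination -hg
  have hψxt : ψ xt = X 0 := by
    rw [hxt, map_sub, map_mul, hCa, haev, hψx, hψWt, hV]
    ring
  have hψyt : ψ (X 1 + G) = X 1 := by
    have hψG : ψ G = X 1 - g := by
      apply hcancel
      have h2 := congrArg ψ hG
      rw [map_sub, map_mul, map_pow, hCa, haev, haev, hψx, hψxt] at h2
      rw [← h2]
      linear_combination hw - hg
    rw [map_add, hψy, hψG]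
    ring
  refine ⟨AlgEquiv.ofAlgHom ψ χ ?_ ?_, ?_⟩
  · apply MvPolynomial.algHom_ext
    intro i
    fin_cases i <;> simp only [AlgHom.comp_apply, AlgHom.id_apply]
    · show ψ (χ (X 0)) = X 0
      rw [hχx, hψxt]
    · show ψ (χ (X 1)) = X 1
      rw [hχy, hψyt]
  · apply MvPolynomial.algHom_ext
    intro i
    fin_cases i <;> simp only [AlgHom.comp_apply, AlgHom.id_apply]
    · show χ (ψ (X 0)) = X 0
      rw [hψx, hχV]
    · show χ (ψ (X 1)) = X 1
      rw [hψy, hχg]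
  · show ψ (X 0) = X 0 + C a * Polynomial.aeval
        ((C a) ^ m * X 1 + Polynomial.aeval (X 0 : MvPolynomial (Fin 2) R) f) Q
    rw [hψx, hV, hw]
end
end

section
/- Let R be a commutative ring, a ∈ R a non-zero-divisor, m ≥ 1, and f, Q ∈ R[X]. Define polynomials g₁,...,g_m ∈ R[X] by g₁ = f and g_i(X) = f(X − a·Q(g_{i−1}(X))) for 2 ≤ i ≤ m, and set v = x + a·Q(aᵐy + f(x)) ∈ R[x,y]. Then g_i(v) ≡ f(x) (mod aⁱ) in R[x,y] for every 1 ≤ i ≤ m. -/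
noncomputable section
open MvPolynomial

lemma aux_sub_dvd {R A : Type} [CommRing R] [CommRing A] [Algebra R A]
    (s t : A) (p : Polynomial R) :
    s - t ∣ Polynomial.aeval s p - Polynomial.aeval t p := by
  simp only [Polynomial.aeval_def, ← Polynomial.eval_map]
  exact Polynomial.sub_dvd_eval_sub _ _ _

/-- with `R` a commutative ring, `a` a non-zero-divisor, `m ≥ 1`,
`f, Q ∈ R[X]`, define `g₁ = f` and `g_i(X) = f(X − a·Q(g_{i−1}(X)))` for `2 ≤ i ≤ m`,
and `v = x + a·Q(aᵐy + f(x)) ∈ R[x,y]` (with `x = X 0`, `y = X 1`).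
Then `g_i(v) ≡ f(x) (mod aⁱ)` for every `1 ≤ i ≤ m`. -/
theorem stmt2 (R : Type) [CommRing R] (m : ℕ) (hm : 1 ≤ m)
    (a : R) (ha : a ∈ nonZeroDivisors R) (f Q : Polynomial R)
    (g : ℕ → Polynomial R) (hg1 : g 1 = f)
    (hg : ∀ i, 2 ≤ i → i ≤ m →
      g i = f.comp (Polynomial.X - Polynomial.C a * Q.comp (g (i - 1)))) :
    ∀ i, 1 ≤ i → i ≤ m →
      Polynomial.aeval
          ((X 0 : MvPolynomial (Fin 2) R) + C a * Polynomial.aeval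
            ((C a) ^ m * X 1 + Polynomial.aeval (X 0 : MvPolynomial (Fin 2) R) f) Q)
          (g i)
        - Polynomial.aeval (X 0 : MvPolynomial (Fin 2) R) f
        ∈ Ideal.span {(C a : MvPolynomial (Fin 2) R) ^ i} := by
  set x : MvPolynomial (Fin 2) R := X 0 with hx
  set u : MvPolynomial (Fin 2) R := (C a) ^ m * X 1 + Polynomial.aeval x f with hu
  set v : MvPolynomial (Fin 2) R := x + C a * Polynomial.aeval u Q with hv
  intro i hi
  induction i, hi using Nat.le_induction with
  | base =>
    intro _
    rw [hg1, Ideal.mem_span_singleton, pow_one]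
    have h1 : v - x ∣ Polynomial.aeval v f - Polynomial.aeval x f := aux_sub_dvd _ _ _
    have h2 : (C a : MvPolynomial (Fin 2) R) ∣ v - x := by
      rw [hv]; ring_nf; exact Dvd.intro _ rfl
    exact h2.trans h1
  | succ n hn ih =>
    intro hnm
    have ihn := ih (by omega)
    rw [Ideal.mem_span_singleton] at ihn ⊢
    rw [hg (n+1) (by omega) hnm]
    simp only [Nat.add_sub_cancel, Polynomial.aeval_comp, map_sub, map_mul,
      Polynomial.aeval_X, Polynomial.aeval_C]
    set w : MvPolynomial (Fin 2) R :=
      v - (algebraMap R (MvPolynomial (Fin 2) R)) a *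
        Polynomial.aeval (Polynomial.aeval v (g n)) Q with hw
    have h1 : w - x ∣ Polynomial.aeval w f - Polynomial.aeval x f := aux_sub_dvd _ _ _
    refine dvd_trans ?_ h1
    have hca : (algebraMap R (MvPolynomial (Fin 2) R)) a = C a := rfl
    have hwx : w - x = C a * (Polynomial.aeval u Q - Polynomial.aeval (Polynomial.aeval v (g n)) Q) := by
      rw [hw, hv, hca]; ring
    rw [hwx, pow_succ, mul_comm ((C a : MvPolynomial (Fin 2) R) ^ n) (C a)]
    refine mul_dvd_mul_left _ ?_
    have h2 : u - Polynomial.aeval v (g n) ∣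
        Polynomial.aeval u Q - Polynomial.aeval (Polynomial.aeval v (g n)) Q :=
      aux_sub_dvd _ _ _
    refine dvd_trans ?_ h2
    have h3 : u - Polynomial.aeval v (g n)
        = (C a) ^ m * X 1 - (Polynomial.aeval v (g n) - Polynomial.aeval x f) := by
      rw [hu]; ring
    rw [h3]
    exact dvd_sub (Dvd.dvd.mul_right (pow_dvd_pow _ (by omega)) _) ihn
end
end

section
/- Let k be a field, m, n ≥ 1, and P ∈ k[a,b]. Then ω = aᵐx + bⁿy + P is a bivariable of k[a,b][x,y]: setting τ_a = a^{−m}y and τ_b = −b^{−n}x, one has k[a^{±1},b][ω,τ_a] = k[a^{±1},b][x,y] and k[a,b^{±1}][ω,τ_b] = k[a,b^{±1}][x,y], and moreover τ_a = τ_b + f(ω) where f(x) = (x − P)/(aᵐbⁿ). -/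
noncomputable section
open MvPolynomial

abbrev K4 (k : Type) [Field k] := FractionRing (MvPolynomial (Fin 4) k)

def av (k : Type) [Field k] : K4 k := algebraMap (MvPolynomial (Fin 4) k) (K4 k) (X 0)
def bv (k : Type) [Field k] : K4 k := algebraMap (MvPolynomial (Fin 4) k) (K4 k) (X 1)
def xv (k : Type) [Field k] : K4 k := algebraMap (MvPolynomial (Fin 4) k) (K4 k) (X 2)
def yv (k : Type) [Field k] : K4 k := algebraMap (MvPolynomial (Fin 4) k) (K4 k) (X 3)

theorem aux_ne (k : Type) [Field k] (i : Fin 4) :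
    algebraMap (MvPolynomial (Fin 4) k) (K4 k) (X i) ≠ 0 :=
  (map_ne_zero_iff _ (IsFractionRing.injective (MvPolynomial (Fin 4) k) (K4 k))).mpr
    (X_ne_zero i)

theorem aux_P (k : Type) [Field k] (P : MvPolynomial (Fin 2) k) :
    MvPolynomial.aeval ![av k, bv k] P ∈ Algebra.adjoin k ({av k, bv k} : Set (K4 k)) := by
  have hsub : Set.range ![av k, bv k] ⊆ ({av k, bv k} : Set (K4 k)) := by
    rintro z ⟨i, rfl⟩; fin_cases i <;> simp
  refine Algebra.adjoin_mono hsub ?_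
  rw [Algebra.adjoin_range_eq_range_aeval]
  exact ⟨P, rfl⟩

theorem aux_main (k F : Type) [Field k] [Field F] [Algebra k F] (m n : ℕ)
    (a b x y p : F) (ha : a ≠ 0) (hb : b ≠ 0)
    (hp : p ∈ Algebra.adjoin k ({a, b} : Set F)) :
    Algebra.adjoin k ({a, a⁻¹, b, a ^ m * x + b ^ n * y + p, (a ^ m)⁻¹ * y} : Set F)
      = Algebra.adjoin k ({a, a⁻¹, b, x, y} : Set F) ∧
    Algebra.adjoin k ({a, b, b⁻¹, a ^ m * x + b ^ n * y + p, -((b ^ n)⁻¹ * x)} : Set F)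
      = Algebra.adjoin k ({a, b, b⁻¹, x, y} : Set F) ∧
    (a ^ m)⁻¹ * y
      = -((b ^ n)⁻¹ * x) + ((a ^ m * x + b ^ n * y + p) - p) / (a ^ m * b ^ n) := by
  have ham : a ^ m ≠ 0 := pow_ne_zero _ ha
  have hbn : b ^ n ≠ 0 := pow_ne_zero _ hb
  set ω := a ^ m * x + b ^ n * y + p with hω
  refine ⟨?_, ?_, ?_⟩
  · apply le_antisymm <;> apply Algebra.adjoin_le
    · have ma : a ∈ Algebra.adjoin k ({a, a⁻¹, b, x, y} : Set F) :=
        Algebra.subset_adjoin (by simp)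
      have mai : a⁻¹ ∈ Algebra.adjoin k ({a, a⁻¹, b, x, y} : Set F) :=
        Algebra.subset_adjoin (by simp)
      have mb : b ∈ Algebra.adjoin k ({a, a⁻¹, b, x, y} : Set F) :=
        Algebra.subset_adjoin (by simp)
      have mx : x ∈ Algebra.adjoin k ({a, a⁻¹, b, x, y} : Set F) :=
        Algebra.subset_adjoin (by simp)
      have my : y ∈ Algebra.adjoin k ({a, a⁻¹, b, x, y} : Set F) :=
        Algebra.subset_adjoin (by simp)
      have mP : p ∈ Algebra.adjoin k ({a, a⁻¹, b, x, y} : Set F) := by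
        refine Algebra.adjoin_mono ?_ hp
        intro z hz
        simp only [Set.mem_insert_iff, Set.mem_singleton_iff] at hz ⊢
        tauto
      intro z hz
      simp only [Set.mem_insert_iff, Set.mem_singleton_iff] at hz
      rcases hz with rfl | rfl | rfl | rfl | rfl
      · exact ma
      · exact mai
      · exact mb
      · exact add_mem (add_mem (mul_mem (pow_mem ma m) mx) (mul_mem (pow_mem mb n) my)) mP
      · rw [← inv_pow]; exact mul_mem (pow_mem mai m) my
    · have ma : a ∈ Algebra.adjoin k ({a, a⁻¹, b, ω, (a ^ m)⁻¹ * y} : Set F) :=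
        Algebra.subset_adjoin (by simp)
      have mai : a⁻¹ ∈ Algebra.adjoin k ({a, a⁻¹, b, ω, (a ^ m)⁻¹ * y} : Set F) :=
        Algebra.subset_adjoin (by simp)
      have mb : b ∈ Algebra.adjoin k ({a, a⁻¹, b, ω, (a ^ m)⁻¹ * y} : Set F) :=
        Algebra.subset_adjoin (by simp)
      have mω : ω ∈ Algebra.adjoin k ({a, a⁻¹, b, ω, (a ^ m)⁻¹ * y} : Set F) :=
        Algebra.subset_adjoin (by simp)
      have mτ : (a ^ m)⁻¹ * y ∈ Algebra.adjoin k ({a, a⁻¹, b, ω, (a ^ m)⁻¹ * y} : Set F) :=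
        Algebra.subset_adjoin (by simp)
      have mP : p ∈ Algebra.adjoin k ({a, a⁻¹, b, ω, (a ^ m)⁻¹ * y} : Set F) := by
        refine Algebra.adjoin_mono ?_ hp
        intro z hz
        simp only [Set.mem_insert_iff, Set.mem_singleton_iff] at hz ⊢
        tauto
      have my : y ∈ Algebra.adjoin k ({a, a⁻¹, b, ω, (a ^ m)⁻¹ * y} : Set F) := by
        have hyeq : y = a ^ m * ((a ^ m)⁻¹ * y) := by field_simp
        have h := mul_mem (pow_mem ma m) mτ
        rwa [← hyeq] at h
      have mx : x ∈ Algebra.adjoin k ({a, a⁻¹, b, ω, (a ^ m)⁻¹ * y} : Set F) := by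
        have hxeq : x = a⁻¹ ^ m * (ω - b ^ n * y - p) := by
          rw [hω, inv_pow, show a ^ m * x + b ^ n * y + p - b ^ n * y - p = a ^ m * x by ring,
            inv_mul_cancel_left₀ ham]
        have h := mul_mem (pow_mem mai m) (sub_mem (sub_mem mω (mul_mem (pow_mem mb n) my)) mP)
        rwa [← hxeq] at h
      intro z hz
      simp only [Set.mem_insert_iff, Set.mem_singleton_iff] at hz
      rcases hz with rfl | rfl | rfl | rfl | rfl
      · exact ma
      · exact mai
      · exact mb
      · exact mx
      · exact my
  · apply le_antisymm <;> apply Algebra.adjoin_le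
    · have ma : a ∈ Algebra.adjoin k ({a, b, b⁻¹, x, y} : Set F) :=
        Algebra.subset_adjoin (by simp)
      have mb : b ∈ Algebra.adjoin k ({a, b, b⁻¹, x, y} : Set F) :=
        Algebra.subset_adjoin (by simp)
      have mbi : b⁻¹ ∈ Algebra.adjoin k ({a, b, b⁻¹, x, y} : Set F) :=
        Algebra.subset_adjoin (by simp)
      have mx : x ∈ Algebra.adjoin k ({a, b, b⁻¹, x, y} : Set F) :=
        Algebra.subset_adjoin (by simp)
      have my : y ∈ Algebra.adjoin k ({a, b, b⁻¹, x, y} : Set F) :=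
        Algebra.subset_adjoin (by simp)
      have mP : p ∈ Algebra.adjoin k ({a, b, b⁻¹, x, y} : Set F) := by
        refine Algebra.adjoin_mono ?_ hp
        intro z hz
        simp only [Set.mem_insert_iff, Set.mem_singleton_iff] at hz ⊢
        tauto
      intro z hz
      simp only [Set.mem_insert_iff, Set.mem_singleton_iff] at hz
      rcases hz with rfl | rfl | rfl | rfl | rfl
      · exact ma
      · exact mb
      · exact mbi
      · exact add_mem (add_mem (mul_mem (pow_mem ma m) mx) (mul_mem (pow_mem mb n) my)) mP
      · rw [← inv_pow]; exact neg_mem (mul_mem (pow_mem mbi n) mx)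
    · have ma : a ∈ Algebra.adjoin k ({a, b, b⁻¹, ω, -((b ^ n)⁻¹ * x)} : Set F) :=
        Algebra.subset_adjoin (by simp)
      have mb : b ∈ Algebra.adjoin k ({a, b, b⁻¹, ω, -((b ^ n)⁻¹ * x)} : Set F) :=
        Algebra.subset_adjoin (by simp)
      have mbi : b⁻¹ ∈ Algebra.adjoin k ({a, b, b⁻¹, ω, -((b ^ n)⁻¹ * x)} : Set F) :=
        Algebra.subset_adjoin (by simp)
      have mω : ω ∈ Algebra.adjoin k ({a, b, b⁻¹, ω, -((b ^ n)⁻¹ * x)} : Set F) :=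
        Algebra.subset_adjoin (by simp)
      have mτ : -((b ^ n)⁻¹ * x) ∈ Algebra.adjoin k ({a, b, b⁻¹, ω, -((b ^ n)⁻¹ * x)} : Set F) :=
        Algebra.subset_adjoin (by simp)
      have mP : p ∈ Algebra.adjoin k ({a, b, b⁻¹, ω, -((b ^ n)⁻¹ * x)} : Set F) := by
        refine Algebra.adjoin_mono ?_ hp
        intro z hz
        simp only [Set.mem_insert_iff, Set.mem_singleton_iff] at hz ⊢
        tauto
      have mx : x ∈ Algebra.adjoin k ({a, b, b⁻¹, ω, -((b ^ n)⁻¹ * x)} : Set F) := by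
        have hxeq : x = -(b ^ n * -((b ^ n)⁻¹ * x)) := by field_simp
        have h := neg_mem (mul_mem (pow_mem mb n) mτ)
        rwa [← hxeq] at h
      have my : y ∈ Algebra.adjoin k ({a, b, b⁻¹, ω, -((b ^ n)⁻¹ * x)} : Set F) := by
        have hyeq : y = b⁻¹ ^ n * (ω - a ^ m * x - p) := by
          rw [hω, inv_pow, show a ^ m * x + b ^ n * y + p - a ^ m * x - p = b ^ n * y by ring,
            inv_mul_cancel_left₀ hbn]
        have h := mul_mem (pow_mem mbi n) (sub_mem (sub_mem mω (mul_mem (pow_mem ma m) mx)) mP)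
        rwa [← hyeq] at h
      intro z hz
      simp only [Set.mem_insert_iff, Set.mem_singleton_iff] at hz
      rcases hz with rfl | rfl | rfl | rfl | rfl
      · exact ma
      · exact mb
      · exact mbi
      · exact mx
      · exact my
  · rw [hω]
    field_simp
    ring

/-- for `m, n ≥ 1` and `P ∈ k[a,b]`, the polynomial `ω = aᵐx + bⁿy + P`
is a bivariable: setting `τₐ = a^{−m}y` and `τ_b = −b^{−n}x`, one has
`k[a^{±1},b][ω,τₐ] = k[a^{±1},b][x,y]` and `k[a,b^{±1}][ω,τ_b] = k[a,b^{±1}][x,y]`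
(as subalgebras of `k(a,b,x,y)`), and moreover `τₐ = τ_b + f(ω)` where
`f(x) = (x − P)/(aᵐbⁿ)`. -/
theorem stmt4 (k : Type) [Field k] (m n : ℕ) (hm : 1 ≤ m) (hn : 1 ≤ n)
    (P : MvPolynomial (Fin 2) k) :
    Algebra.adjoin k ({av k, (av k)⁻¹, bv k,
        (av k) ^ m * xv k + (bv k) ^ n * yv k + MvPolynomial.aeval ![av k, bv k] P,
        ((av k) ^ m)⁻¹ * yv k} : Set (K4 k))
      = Algebra.adjoin k ({av k, (av k)⁻¹, bv k, xv k, yv k} : Set (K4 k)) ∧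
    Algebra.adjoin k ({av k, bv k, (bv k)⁻¹,
        (av k) ^ m * xv k + (bv k) ^ n * yv k + MvPolynomial.aeval ![av k, bv k] P,
        -(((bv k) ^ n)⁻¹ * xv k)} : Set (K4 k))
      = Algebra.adjoin k ({av k, bv k, (bv k)⁻¹, xv k, yv k} : Set (K4 k)) ∧
    ((av k) ^ m)⁻¹ * yv k
      = -(((bv k) ^ n)⁻¹ * xv k)
        + (((av k) ^ m * xv k + (bv k) ^ n * yv k + MvPolynomial.aeval ![av k, bv k] P)
            - MvPolynomial.aeval ![av k, bv k] P) / ((av k) ^ m * (bv k) ^ n) :=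
  aux_main k (K4 k) m n (av k) (bv k) (xv k) (yv k) _ (aux_ne k 0) (aux_ne k 1) (aux_P k P)
end
end

section
/- Let k be a field and P ∈ k[x]. The polynomial ω = ax + b²y + bP(x) ∈ k[a,b][x,y] is a bivariable. Specifically, with τ_b = −x/b² one has k[a,b^{±1}][ω,τ_b] = k[a,b^{±1}][x,y], and with τ_a = y/a + P(x)/(ab) − (1/(ab))·P(x + (b²y + bP(x))/a) one has τ_a ∈ k[a^{±1},b][x,y] and k[a^{±1},b][ω,τ_a] = k[a^{±1},b][x,y]; moreover τ_a = τ_b + f(ω) where f(x) = x/(ab²) − P(x/a)/(ab). -/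
noncomputable section
open MvPolynomial

/-- Evaluation of a one-variable polynomial `P ∈ k[x]` at an element of `k(a,b,x,y)`. -/
def pe (k : Type) [Field k] (P : Polynomial k) (t : K4 k) : K4 k := Polynomial.aeval t P


theorem peMem (k : Type) [Field k] (S : Subalgebra k (K4 k)) (t : K4 k) (ht : t ∈ S)
    (P : Polynomial k) : Polynomial.aeval t P ∈ S := by
  have := Polynomial.aeval_algHom_apply S.val ⟨t, ht⟩ P
  simp only [Subalgebra.coe_val] at this
  rw [this]
  exact SetLike.coe_mem _

theorem peTaylor (k : Type) [Field k] (P : Polynomial k) (S : Subalgebra k (K4 k)) {u v : K4 k}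
    (hu : u ∈ S) (hv : v ∈ S) :
    ∃ c ∈ S, Polynomial.aeval (u + v) P = Polynomial.aeval u P + v * c := by
  obtain ⟨c, hc⟩ := Polynomial.sub_dvd_eval_sub (⟨u + v, S.add_mem hu hv⟩ : S) ⟨u, hu⟩
    (P.map (algebraMap k S))
  refine ⟨c, c.2, ?_⟩
  have e1 : ∀ (t : S), Polynomial.eval t (P.map (algebraMap k S)) = Polynomial.aeval t P := by
    intro t; rw [Polynomial.eval_map, Polynomial.aeval_def]
  rw [e1, e1] at hc
  have e2 : ∀ t : S, ((Polynomial.aeval t P : S) : K4 k) = Polynomial.aeval (t : K4 k) P := by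
    intro t
    simpa using (Polynomial.aeval_algHom_apply S.val t P).symm
  have h2 := congrArg S.val hc
  simp only [map_sub, map_mul, Subalgebra.coe_val] at h2
  rw [e2, e2] at h2
  push_cast at h2
  linear_combination h2


set_option maxHeartbeats 4000000

/-- for `P ∈ k[x]`, the polynomial `ω = ax + b²y + bP(x)` is a bivariable.
With `τ_b = −x/b²` one has `k[a,b^{±1}][ω,τ_b] = k[a,b^{±1}][x,y]`, and with
`τₐ = y/a + P(x)/(ab) − (1/(ab))·P(x + (b²y + bP(x))/a)` one has
`τₐ ∈ k[a^{±1},b][x,y]` and `k[a^{±1},b][ω,τₐ] = k[a^{±1},b][x,y]`; moreover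
`τₐ = τ_b + f(ω)` with `f(x) = x/(ab²) − P(x/a)/(ab)`.
All rings are viewed as subalgebras of `k(a,b,x,y)`. -/
theorem stmt5 (k : Type) [Field k] (P : Polynomial k) :
    (yv k / av k + pe k P (xv k) / (av k * bv k)
        - (1 / (av k * bv k)) * pe k P (xv k + ((bv k) ^ 2 * yv k + bv k * pe k P (xv k)) / av k))
      ∈ Algebra.adjoin k ({av k, (av k)⁻¹, bv k, xv k, yv k} : Set (K4 k)) ∧
    Algebra.adjoin k ({av k, bv k, (bv k)⁻¹,
        av k * xv k + (bv k) ^ 2 * yv k + bv k * pe k P (xv k),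
        -(xv k / (bv k) ^ 2)} : Set (K4 k))
      = Algebra.adjoin k ({av k, bv k, (bv k)⁻¹, xv k, yv k} : Set (K4 k)) ∧
    Algebra.adjoin k ({av k, (av k)⁻¹, bv k,
        av k * xv k + (bv k) ^ 2 * yv k + bv k * pe k P (xv k),
        yv k / av k + pe k P (xv k) / (av k * bv k)
          - (1 / (av k * bv k)) * pe k P (xv k + ((bv k) ^ 2 * yv k + bv k * pe k P (xv k)) / av k)}
        : Set (K4 k))
      = Algebra.adjoin k ({av k, (av k)⁻¹, bv k, xv k, yv k} : Set (K4 k)) ∧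
    (yv k / av k + pe k P (xv k) / (av k * bv k)
        - (1 / (av k * bv k)) * pe k P (xv k + ((bv k) ^ 2 * yv k + bv k * pe k P (xv k)) / av k))
      = -(xv k / (bv k) ^ 2)
        + ((av k * xv k + (bv k) ^ 2 * yv k + bv k * pe k P (xv k)) / (av k * (bv k) ^ 2)
          - pe k P ((av k * xv k + (bv k) ^ 2 * yv k + bv k * pe k P (xv k)) / av k)
              / (av k * bv k)) := by
  have ha : av k ≠ 0 := by
    simp [av, IsFractionRing.to_map_eq_zero_iff, MvPolynomial.X_ne_zero]
  have hb : bv k ≠ 0 := by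
    simp [bv, IsFractionRing.to_map_eq_zero_iff, MvPolynomial.X_ne_zero]
  simp only [pe]
  set a := av k
  set b := bv k
  set x := xv k
  set y := yv k
  set p := Polynomial.aeval x P with hp
  set ω := a * x + b ^ 2 * y + b * p with hω
  have harg : x + (b ^ 2 * y + b * p) / a = ω * a⁻¹ := by
    rw [hω]; field_simp; ring
  rw [harg]
  set q := Polynomial.aeval (ω * a⁻¹) P with hq
  clear_value a b x y p ω q
  -- PART 1 : τₐ ∈ k[a^{±1}, b][x, y]
  set A := Algebra.adjoin k ({a, a⁻¹, b, x, y} : Set (K4 k)) with hA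
  have hAa : a ∈ A := Algebra.subset_adjoin (by tauto)
  have hAai : a⁻¹ ∈ A := Algebra.subset_adjoin (by tauto)
  have hAb : b ∈ A := Algebra.subset_adjoin (by tauto)
  have hAx : x ∈ A := Algebra.subset_adjoin (by tauto)
  have hAy : y ∈ A := Algebra.subset_adjoin (by tauto)
  have hAp : p ∈ A := hp ▸ peMem k A x hAx P
  have hRA : (b * y + p) * a⁻¹ ∈ A := A.mul_mem (A.add_mem (A.mul_mem hAb hAy) hAp) hAai
  obtain ⟨c, hcA, hc⟩ := peTaylor k P A hAx (A.mul_mem hAb hRA)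
  have huc : x + b * ((b * y + p) * a⁻¹) = ω * a⁻¹ := by
    rw [hω]; field_simp; ring
  rw [huc, ← hp, ← hq] at hc
  -- hc : q = p + b * ((b*y+p)*a⁻¹) * c
  have part1 : y / a + p / (a * b) - 1 / (a * b) * q ∈ A := by
    have hτ : y / a + p / (a * b) - 1 / (a * b) * q
        = y * a⁻¹ - (b * y + p) * a⁻¹ * c * a⁻¹ := by
      rw [hc]; field_simp; ring
    rw [hτ]
    exact A.sub_mem (A.mul_mem hAy hAai) (A.mul_mem (A.mul_mem hRA hcA) hAai)
  refine ⟨part1, ?_, ?_, ?_⟩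
  -- PART 2 : k[a, b^{±1}][ω, τ_b] = k[a, b^{±1}][x, y]
  · apply le_antisymm <;> apply Algebra.adjoin_le <;> intro z hz <;>
      simp only [Set.mem_insert_iff, Set.mem_singleton_iff] at hz
    · set S := Algebra.adjoin k ({a, b, b⁻¹, x, y} : Set (K4 k)) with hS
      have hSa : a ∈ S := Algebra.subset_adjoin (by tauto)
      have hSb : b ∈ S := Algebra.subset_adjoin (by tauto)
      have hSbi : b⁻¹ ∈ S := Algebra.subset_adjoin (by tauto)
      have hSx : x ∈ S := Algebra.subset_adjoin (by tauto)
      have hSy : y ∈ S := Algebra.subset_adjoin (by tauto)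
      have hSp : p ∈ S := hp ▸ peMem k S x hSx P
      rcases hz with rfl | rfl | rfl | rfl | rfl
      · exact hSa
      · exact hSb
      · exact hSbi
      · rw [hω]
        exact S.add_mem (S.add_mem (S.mul_mem hSa hSx)
          (S.mul_mem (pow_mem hSb 2) hSy)) (S.mul_mem hSb hSp)
      · have h : -(x / b ^ 2) = -(x * (b⁻¹ * b⁻¹)) := by ring
        rw [h]
        exact S.neg_mem (S.mul_mem hSx (S.mul_mem hSbi hSbi))
    · set S := Algebra.adjoin k ({a, b, b⁻¹, ω, -(x / b ^ 2)} : Set (K4 k)) with hS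
      have hSa : a ∈ S := Algebra.subset_adjoin (by tauto)
      have hSb : b ∈ S := Algebra.subset_adjoin (by tauto)
      have hSbi : b⁻¹ ∈ S := Algebra.subset_adjoin (by tauto)
      have hSω : ω ∈ S := Algebra.subset_adjoin (by tauto)
      have hSτ : -(x / b ^ 2) ∈ S := Algebra.subset_adjoin (by tauto)
      have hSx : x ∈ S := by
        have h : x = -(-(x / b ^ 2)) * (b * b) := by
          linear_combination (-(x * (b * b⁻¹ + 1))) * mul_inv_cancel₀ hb
        rw [h]
        exact S.mul_mem (S.neg_mem hSτ) (S.mul_mem hSb hSb)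
      have hSp : p ∈ S := hp ▸ peMem k S x hSx P
      have hSy : y ∈ S := by
        have h : y = (ω - a * x - b * p) * (b⁻¹ * b⁻¹) := by
          rw [hω]; field_simp; ring
        rw [h]
        exact S.mul_mem (S.sub_mem (S.sub_mem hSω (S.mul_mem hSa hSx)) (S.mul_mem hSb hSp))
          (S.mul_mem hSbi hSbi)
      rcases hz with rfl | rfl | rfl | rfl | rfl
      · exact hSa
      · exact hSb
      · exact hSbi
      · exact hSx
      · exact hSy
  -- PART 3 : k[a^{±1}, b][ω, τₐ] = k[a^{±1}, b][x, y]
  · apply le_antisymm <;> apply Algebra.adjoin_le <;> intro z hz <;>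
      simp only [Set.mem_insert_iff, Set.mem_singleton_iff] at hz
    · rcases hz with rfl | rfl | rfl | rfl | rfl
      · exact hAa
      · exact hAai
      · exact hAb
      · rw [hω]
        exact A.add_mem (A.add_mem (A.mul_mem hAa hAx)
          (A.mul_mem (pow_mem hAb 2) hAy)) (A.mul_mem hAb hAp)
      · exact part1
    · set τ := y / a + p / (a * b) - 1 / (a * b) * q with hτdef
      clear_value τ
      set B := Algebra.adjoin k ({a, a⁻¹, b, ω, τ} : Set (K4 k)) with hB
      have hBa : a ∈ B := Algebra.subset_adjoin (by tauto)
      have hBai : a⁻¹ ∈ B := Algebra.subset_adjoin (by tauto)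
      have hBb : b ∈ B := Algebra.subset_adjoin (by tauto)
      have hBω : ω ∈ B := Algebra.subset_adjoin (by tauto)
      have hBτ : τ ∈ B := Algebra.subset_adjoin (by tauto)
      have hBq : q ∈ B := hq ▸ peMem k B _ (B.mul_mem hBω hBai) P
      set s := q * a⁻¹ + b * τ with hs
      clear_value s
      have hBs : s ∈ B := hs ▸ B.add_mem (B.mul_mem hBq hBai) (B.mul_mem hBb hBτ)
      have hsR : s = (b * y + p) * a⁻¹ := by
        rw [hs, hτdef]
        linear_combination (a⁻¹ * (p - q)) * mul_inv_cancel₀ hb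
      have hu : ω * a⁻¹ + -(b * s) = x := by
        rw [hsR, hω]; field_simp; ring
      obtain ⟨c', hc'B, hc'⟩ := peTaylor k P B (B.mul_mem hBω hBai)
        (B.neg_mem (B.mul_mem hBb hBs))
      rw [hu, ← hp, ← hq] at hc'
      -- hc' : p = q + -(b*s) * c'
      have hpq : p - q = -(b * s) * c' := by linear_combination hc'
      have hBx : x ∈ B := by
        rw [← hu]
        exact B.add_mem (B.mul_mem hBω hBai) (B.neg_mem (B.mul_mem hBb hBs))
      have hBy : y ∈ B := by
        have hy : y = a * τ + s * c' := by
          rw [hτdef]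
          linear_combination (-y + s * c' * b * b⁻¹) * mul_inv_cancel₀ ha
            + (s * c') * mul_inv_cancel₀ hb + (-(a * a⁻¹ * b⁻¹)) * hpq
        rw [hy]
        exact B.add_mem (B.mul_mem hBa hBτ) (B.mul_mem hBs hc'B)
      rcases hz with rfl | rfl | rfl | rfl | rfl
      · exact hBa
      · exact hBai
      · exact hBb
      · exact hBx
      · exact hBy
  -- PART 4 : τₐ = τ_b + f(ω)
  · have harg2 : ω / a = ω * a⁻¹ := div_eq_mul_inv _ _
    rw [harg2, ← hq, hω]
    linear_combination (-(x * b⁻¹ ^ 2)) * mul_inv_cancel₀ ha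
      + (-(p * a⁻¹ * b⁻¹) - y * a⁻¹ * (b * b⁻¹ + 1)) * mul_inv_cancel₀ hb
end
end

section
/- Let k be a field, n ≥ 1, P ∈ k[z], and in k[a^{±1},b^{±1}][x] define, for any integer m with mn > deg P, f_m = x/(ab²) − (1/(abᵐ))·((bᵐ − (aⁿx)ᵐ)/(b − aⁿx))·P(x/a). Then for any m, m' with mn > deg P and m'n > deg P, the difference f_m − f_{m'} lies in k[a^{±1},b][x] + k[a,b^{±1}][x]. -/
noncomputable section
open MvPolynomial

abbrev K3 (k : Type) [Field k] := FractionRing (MvPolynomial (Fin 3) k)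

def a3 (k : Type) [Field k] : K3 k := algebraMap (MvPolynomial (Fin 3) k) (K3 k) (X 0)
def b3 (k : Type) [Field k] : K3 k := algebraMap (MvPolynomial (Fin 3) k) (K3 k) (X 1)
def x3 (k : Type) [Field k] : K3 k := algebraMap (MvPolynomial (Fin 3) k) (K3 k) (X 2)

def fP (k : Type) [Field k] (P : Polynomial k) (n m : ℕ) : K3 k :=
  x3 k / (a3 k * (b3 k) ^ 2)
    - (1 / (a3 k * (b3 k) ^ m))
      * (∑ j ∈ Finset.range m, (b3 k) ^ (m - 1 - j) * ((a3 k) ^ n * x3 k) ^ j)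
      * Polynomial.aeval (x3 k / a3 k) P

lemma a3_ne (k : Type) [Field k] : a3 k ≠ 0 := by
  simpa [a3] using (map_ne_zero_iff _ (IsFractionRing.injective (MvPolynomial (Fin 3) k) (K3 k))).mpr (X_ne_zero 0)

lemma b3_ne (k : Type) [Field k] : b3 k ≠ 0 := by
  simpa [b3] using (map_ne_zero_iff _ (IsFractionRing.injective (MvPolynomial (Fin 3) k) (K3 k))).mpr (X_ne_zero 1)

lemma fP_eq (k : Type) [Field k] (P : Polynomial k) (n m : ℕ) :
    fP k P n m = x3 k / (a3 k * (b3 k) ^ 2)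
      - ∑ j ∈ Finset.range m,
          ((a3 k) ^ n * x3 k) ^ j / (a3 k * (b3 k) ^ (j + 1))
            * Polynomial.aeval (x3 k / a3 k) P := by
  unfold fP
  congr 1
  rw [Finset.mul_sum, Finset.sum_mul]
  refine Finset.sum_congr rfl fun j hj => ?_
  rw [Finset.mem_range] at hj
  have ha := a3_ne k
  have hb := b3_ne k
  have hpow : (b3 k) ^ (m - 1 - j) * (b3 k) ^ (j + 1) = (b3 k) ^ m := by
    rw [← pow_add]; congr 1; omega
  field_simp
  rw [← hpow]; ring

lemma term_mem (k : Type) [Field k] (P : Polynomial k) (n j : ℕ) (hj : P.natDegree < n * j) :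
    ((a3 k) ^ n * x3 k) ^ j / (a3 k * (b3 k) ^ (j + 1)) * Polynomial.aeval (x3 k / a3 k) P
      ∈ Algebra.adjoin k ({a3 k, b3 k, (b3 k)⁻¹, x3 k} : Set (K3 k)) := by
  have ha := a3_ne k
  have hb := b3_ne k
  have key : ((a3 k) ^ n * x3 k) ^ j / (a3 k * (b3 k) ^ (j + 1)) * Polynomial.aeval (x3 k / a3 k) P
      = (∑ i ∈ Finset.range (P.natDegree + 1),
          P.coeff i • ((a3 k) ^ (n * j - 1 - i) * (x3 k) ^ (j + i))) * ((b3 k)⁻¹) ^ (j + 1) := by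
    rw [Polynomial.aeval_eq_sum_range, Finset.mul_sum, Finset.sum_mul]
    refine Finset.sum_congr rfl fun i hi => ?_
    rw [Finset.mem_range, Nat.lt_succ_iff] at hi
    have hI : i < n * j := lt_of_le_of_lt hi hj
    have hpa : (a3 k) ^ (n * j) = (a3 k) ^ (n * j - 1 - i) * (a3 k) ^ (i + 1) := by
      rw [← pow_add]; congr 1; omega
    rw [mul_smul_comm, smul_mul_assoc]
    congr 1
    rw [mul_pow, ← pow_mul, hpa, div_pow]
    field_simp
    have hB : b3 k * b3 k ^ j * (b3 k)⁻¹ * (b3 k)⁻¹ ^ j = 1 := by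
      rw [inv_pow]; field_simp
    linear_combination (-(a3 k * a3 k ^ i * x3 k ^ i * x3 k ^ j)) * hB
  rw [key]
  have hA : a3 k ∈ Algebra.adjoin k ({a3 k, b3 k, (b3 k)⁻¹, x3 k} : Set (K3 k)) :=
    Algebra.subset_adjoin (by simp)
  have hBi : (b3 k)⁻¹ ∈ Algebra.adjoin k ({a3 k, b3 k, (b3 k)⁻¹, x3 k} : Set (K3 k)) :=
    Algebra.subset_adjoin (by simp)
  have hX : x3 k ∈ Algebra.adjoin k ({a3 k, b3 k, (b3 k)⁻¹, x3 k} : Set (K3 k)) :=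
    Algebra.subset_adjoin (by simp)
  exact mul_mem
    (Subalgebra.sum_mem _ fun i _ => Subalgebra.smul_mem _ (mul_mem (pow_mem hA _) (pow_mem hX _)) _)
    (pow_mem hBi _)

lemma diff_mem (k : Type) [Field k] (n : ℕ) (P : Polynomial k) (m m' : ℕ)
    (hm' : P.natDegree < m' * n) (hle : m' ≤ m) :
    fP k P n m - fP k P n m' ∈ Algebra.adjoin k ({a3 k, b3 k, (b3 k)⁻¹, x3 k} : Set (K3 k)) := by
  rw [fP_eq, fP_eq]
  rw [Finset.range_eq_Ico, ← Finset.sum_Ico_consecutive _ (Nat.zero_le m') hle]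
  have hsimp : ∀ u v w : K3 k, u - v - (u - w) = -(w + v - w - v) + -(v + w - v - w) + (w - v) := by
    intro u v w; ring
  have : x3 k / (a3 k * (b3 k) ^ 2)
      - ((∑ j ∈ Finset.Ico 0 m', ((a3 k) ^ n * x3 k) ^ j / (a3 k * (b3 k) ^ (j + 1))
            * Polynomial.aeval (x3 k / a3 k) P)
        + ∑ j ∈ Finset.Ico m' m, ((a3 k) ^ n * x3 k) ^ j / (a3 k * (b3 k) ^ (j + 1))
            * Polynomial.aeval (x3 k / a3 k) P)
      - (x3 k / (a3 k * (b3 k) ^ 2)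
        - ∑ j ∈ Finset.Ico 0 m', ((a3 k) ^ n * x3 k) ^ j / (a3 k * (b3 k) ^ (j + 1))
            * Polynomial.aeval (x3 k / a3 k) P)
      = -∑ j ∈ Finset.Ico m' m, ((a3 k) ^ n * x3 k) ^ j / (a3 k * (b3 k) ^ (j + 1))
            * Polynomial.aeval (x3 k / a3 k) P := by ring
  rw [← Finset.range_eq_Ico] at this ⊢; rw [this]
  refine neg_mem (Subalgebra.sum_mem _ fun j hj => ?_)
  rw [Finset.mem_Ico] at hj
  refine term_mem k P n j (lt_of_lt_of_le ?_ (Nat.mul_le_mul_left n hj.1))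
  rw [mul_comm] at hm'; exact hm'

/-- for `n ≥ 1`, `P ∈ k[z]` and any `m, m'` with `mn > deg P` and
`m'n > deg P`, the difference `f_m − f_{m'}` lies in `k[a^{±1},b][x] + k[a,b^{±1}][x]`
(subalgebras of `k(a,b,x)`). -/
theorem stmt6 (k : Type) [Field k] (n : ℕ) (hn : 1 ≤ n) (P : Polynomial k)
    (m m' : ℕ) (hm : P.natDegree < m * n) (hm' : P.natDegree < m' * n) :
    ∃ ra ∈ Algebra.adjoin k ({a3 k, (a3 k)⁻¹, b3 k, x3 k} : Set (K3 k)),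
    ∃ rb ∈ Algebra.adjoin k ({a3 k, b3 k, (b3 k)⁻¹, x3 k} : Set (K3 k)),
      fP k P n m - fP k P n m' = ra + rb := by
  refine ⟨0, Subalgebra.zero_mem _, fP k P n m - fP k P n m', ?_, by ring⟩
  rcases le_total m' m with h | h
  · exact diff_mem k n P m m' hm' h
  · have := diff_mem k n P m' m hm h
    simpa using neg_mem this
end
end

section
/- Let k be a field, m, n ≥ 1, and P ∈ k[a,b,x]. Let Q = aᵐu − bⁿv − P ∈ k[a,b,x,u,v]. If the polynomial P(0,0,x) ∈ k[x] has degree 1, then Q is a k[a,b]-variable of k[a,b,x,u,v]; i.e., there is a k[a,b]-algebra automorphism of k[a,b][x,u,v] sending x to Q. -/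
noncomputable section
open MvPolynomial

namespace S11

variable {k : Type} [Field k]

lemma powdiff {R₀ B : Type*} [CommSemiring R₀] [CommRing B] [Algebra R₀ B] (T : Subalgebra R₀ B)
    {y z : B} (hy : y ∈ T) (hz : z ∈ T) :
    ∀ n : ℕ, ∃ h ∈ T, (y + z) ^ n = y ^ n + z * h := by
  intro n
  induction n with
  | zero => exact ⟨0, zero_mem T, by simp⟩
  | succ n ih =>
    obtain ⟨h, hT, he⟩ := ih
    refine ⟨y ^ n + h * (y + z), add_mem (pow_mem hy n) (mul_mem hT (add_mem hy hz)), ?_⟩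
    rw [pow_succ, he]; ring

variable {K : Type} [CommRing K] [Algebra k K]

/-- compose with a perturbation of X -/
lemma shift (c : K) (p : Polynomial K) (q : Polynomial K) :
    ∃ s : Polynomial K,
      q.comp (Polynomial.X + Polynomial.C c * p) = q + Polynomial.C c * s := by
  induction q using Polynomial.induction_on with
  | C a => exact ⟨0, by simp⟩
  | add q r hq hr =>
    obtain ⟨s1, h1⟩ := hq; obtain ⟨s2, h2⟩ := hr
    exact ⟨s1 + s2, by rw [Polynomial.add_comp, h1, h2]; ring⟩
  | monomial n a _ =>
    obtain ⟨h, -, he⟩ := powdiff (⊤ : Subalgebra ℤ (Polynomial K))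
      (Algebra.mem_top (x := Polynomial.X)) (Algebra.mem_top (x := Polynomial.C c * p))
      (n + 1)
    refine ⟨Polynomial.C a * p * h, ?_⟩
    rw [Polynomial.mul_comp, Polynomial.C_comp, Polynomial.pow_comp, Polynomial.X_comp, he]
    ring

lemma newton (c : K) (p : Polynomial K) :
    ∀ j : ℕ, ∃ G d : Polynomial K,
      (Polynomial.X + Polynomial.C c * G).comp (Polynomial.X + Polynomial.C c * p)
        = Polynomial.X + Polynomial.C (c ^ (j + 1)) * d := by
  intro j
  induction j with
  | zero => exact ⟨0, p, by simp⟩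
  | succ j ih =>
    obtain ⟨G, d, hGd⟩ := ih
    obtain ⟨s, hs⟩ := shift c p d
    refine ⟨G - Polynomial.C (c ^ j) * d, -s, ?_⟩
    have e1 : Polynomial.X + Polynomial.C c * (G - Polynomial.C (c ^ j) * d)
        = (Polynomial.X + Polynomial.C c * G) - Polynomial.C (c ^ (j + 1)) * d := by
      rw [map_pow, map_pow, pow_succ]; ring
    rw [e1, Polynomial.sub_comp, hGd, Polynomial.mul_comp, Polynomial.C_comp, hs]
    rw [map_pow, map_pow, pow_succ, pow_succ]
    ring



abbrev R5 (k : Type) [Field k] := MvPolynomial (Fin 5) k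

/-- evaluation of a one-variable polynomial lands in a subalgebra -/
lemma evt (T : Subalgebra k (R5 k)) (ι : K →ₐ[k] R5 k) (hι : ∀ z : K, ι z ∈ T)
    {y : R5 k} (hy : y ∈ T) (f : Polynomial K) :
    Polynomial.eval₂ (ι : K →+* R5 k) y f ∈ T := by
  induction f using Polynomial.induction_on with
  | C a => simpa using hι a
  | add q r hq hr => rw [Polynomial.eval₂_add]; exact add_mem hq hr
  | monomial n a _ =>
    rw [Polynomial.eval₂_mul, Polynomial.eval₂_C, Polynomial.eval₂_pow, Polynomial.eval₂_X]
    exact mul_mem (hι a) (pow_mem hy (n + 1))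

/-- evaluation of an MvPolynomial over k lands in a subalgebra -/
lemma mvevt {B : Type*} [CommRing B] [Algebra k B] (T : Subalgebra k B) {l : ℕ}
    (f : Fin l → B) (hf : ∀ i, f i ∈ T) (w : MvPolynomial (Fin l) k) :
    aeval f w ∈ T := by
  induction w using MvPolynomial.induction_on with
  | C a => simpa using T.algebraMap_mem a
  | add q r hq hr => rw [map_add]; exact add_mem hq hr
  | mul_X q i hq => rw [map_mul, aeval_X]; exact mul_mem hq (hf i)

/-- divided differences at the level of evaluations -/
lemma dd (T : Subalgebra k (R5 k)) (ι : K →ₐ[k] R5 k) (hι : ∀ z : K, ι z ∈ T)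
    {s t : R5 k} (hs : s ∈ T) (ht : t ∈ T) (G : Polynomial K) :
    ∃ h ∈ T, Polynomial.eval₂ (ι : K →+* R5 k) (s + t) G
      = Polynomial.eval₂ (ι : K →+* R5 k) s G + t * h := by
  induction G using Polynomial.induction_on with
  | C a => exact ⟨0, zero_mem T, by simp⟩
  | add q r hq hr =>
    obtain ⟨h1, m1, e1⟩ := hq; obtain ⟨h2, m2, e2⟩ := hr
    exact ⟨h1 + h2, add_mem m1 m2, by rw [Polynomial.eval₂_add, Polynomial.eval₂_add, e1, e2]; ring⟩
  | monomial n a _ =>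
    obtain ⟨h, hT, he⟩ := powdiff T hs ht (n + 1)
    refine ⟨ι a * h, mul_mem (hι a) hT, ?_⟩
    simp only [Polynomial.eval₂_mul, Polynomial.eval₂_C, Polynomial.eval₂_pow,
      Polynomial.eval₂_X, he, AlgHom.coe_toRingHom]
    ring

/-- surjective algebra endomorphism of a Noetherian ring is injective -/
lemma noeth_inj (f : R5 k →ₐ[k] R5 k) (hs : Function.Surjective f) :
    Function.Injective f := by
  let g : ℕ → (R5 k →+* R5 k) := fun n => Nat.rec (RingHom.id _) (fun _ gn => (f : R5 k →+* R5 k).comp gn) n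
  have hg0 : g 0 = RingHom.id _ := rfl
  have hgs : ∀ n, g (n + 1) = (f : R5 k →+* R5 k).comp (g n) := fun n => rfl
  have hsurj : ∀ n, Function.Surjective (g n) := by
    intro n; induction n with
    | zero => exact fun z => ⟨z, rfl⟩
    | succ n ih => rw [hgs]; exact hs.comp ih
  have hmono : Monotone (fun n => RingHom.ker (g n)) := by
    apply monotone_nat_of_le_succ
    intro n z hz
    rw [RingHom.mem_ker] at hz ⊢
    rw [hgs, RingHom.comp_apply, hz, map_zero]
  obtain ⟨N, hN⟩ := monotone_stabilizes_iff_noetherian.mpr inferInstance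
    ⟨fun n => RingHom.ker (g n), hmono⟩
  rw [injective_iff_map_eq_zero]
  intro z hz
  obtain ⟨w, rfl⟩ := hsurj N z
  have : w ∈ RingHom.ker (g (N + 1)) := by
    rw [RingHom.mem_ker, hgs, RingHom.comp_apply]
    exact hz
  have hker : RingHom.ker (g N) = RingHom.ker (g (N + 1)) := hN (N + 1) (Nat.le_succ N)
  rw [← RingHom.mem_ker, hker]
  exact this

/-- generators in the range imply surjectivity -/
lemma surj_of_gens (f : R5 k →ₐ[k] R5 k) (h : ∀ i, X i ∈ f.range) :
    Function.Surjective f := by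
  have htop : (⊤ : Subalgebra k (R5 k)) ≤ f.range := by
    rw [← MvPolynomial.adjoin_range_X]
    exact Algebra.adjoin_le (by rintro _ ⟨i, rfl⟩; exact h i)
  intro z
  obtain ⟨w, hw⟩ := htop (Algebra.mem_top (x := z))
  exact ⟨w, hw⟩


lemma geom {B : Type*} [CommRing B] (w : B) (m : ℕ) :
    (1 + w) * (∑ i ∈ Finset.range m, (-w) ^ i) = 1 - (-w) ^ m := by
  induction m with
  | zero => simp
  | succ m ih =>
    rw [Finset.sum_range_succ, mul_add, ih, pow_succ]
    ring

/-- The core Asanuma-type construction. -/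
lemma core (ι : K →ₐ[k] R5 k) (c : K) (m : ℕ) (hm : 1 ≤ m) (p : Polynomial K)
    (xx uu : R5 k) :
    ∃ U : R5 k, U ∈ Algebra.adjoin k (Set.range (ι : K → R5 k) ∪ {xx, uu}) ∧
      ∀ T : Subalgebra k (R5 k), (∀ z : K, ι z ∈ T) →
        xx + ι c * Polynomial.eval₂ (ι : K →+* R5 k) xx p + ι c ^ m * uu ∈ T → U ∈ T →
        xx ∈ T ∧ uu ∈ T := by
  classical
  obtain ⟨G, d, hGd⟩ := newton c p (m - 1)
  rw [Nat.sub_add_cancel hm] at hGd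
  set s : R5 k := xx + ι c * Polynomial.eval₂ (ι : K →+* R5 k) xx p with hsdef
  set tt : R5 k := ι c ^ m * uu with httdef
  set D : R5 k := Polynomial.eval₂ (ι : K →+* R5 k) xx d with hDdef
  set Tdd : Subalgebra k (R5 k) := Algebra.adjoin k (Set.range (ι : K → R5 k) ∪ {s, tt}) with hTdd
  have hιdd : ∀ z : K, ι z ∈ Tdd := fun z =>
    Algebra.subset_adjoin (Set.mem_union_left _ ⟨z, rfl⟩)
  have hsdd : s ∈ Tdd := Algebra.subset_adjoin (Set.mem_union_right _ (Set.mem_insert _ _))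
  have httdd : tt ∈ Tdd := Algebra.subset_adjoin (Set.mem_union_right _
    (Set.mem_insert_of_mem _ rfl))
  obtain ⟨hG, hGdd, hGe⟩ := dd Tdd ι hιdd hsdd httdd G
  have hφs : Polynomial.eval₂ (ι : K →+* R5 k) xx (Polynomial.X + Polynomial.C c * p) = s := by
    simp only [Polynomial.eval₂_add, Polynomial.eval₂_mul, Polynomial.eval₂_C,
      Polynomial.eval₂_X, AlgHom.coe_toRingHom, hsdef]
  have key1 : Polynomial.eval₂ (ι : K →+* R5 k) s (Polynomial.X + Polynomial.C c * G)
      = xx + ι c ^ m * D := by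
    have h0 := congrArg (Polynomial.eval₂ (ι : K →+* R5 k) xx) hGd
    rw [Polynomial.eval₂_comp, hφs] at h0
    rw [h0]
    simp only [Polynomial.eval₂_add, Polynomial.eval₂_mul, Polynomial.eval₂_pow,
      Polynomial.eval₂_C, Polynomial.eval₂_X, AlgHom.coe_toRingHom, map_pow, hDdef]
  have key3 : Polynomial.eval₂ (ι : K →+* R5 k) (s + tt) (Polynomial.X + Polynomial.C c * G)
      = xx + ι c ^ m * D + tt * (1 + ι c * hG) := by
    have e2 : Polynomial.eval₂ (ι : K →+* R5 k) (s + tt) (Polynomial.X + Polynomial.C c * G)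
        = s + tt + ι c * Polynomial.eval₂ (ι : K →+* R5 k) (s + tt) G := by
      simp only [Polynomial.eval₂_add, Polynomial.eval₂_mul, Polynomial.eval₂_C,
        Polynomial.eval₂_X, AlgHom.coe_toRingHom]
    have e3 : Polynomial.eval₂ (ι : K →+* R5 k) s (Polynomial.X + Polynomial.C c * G)
        = s + ι c * Polynomial.eval₂ (ι : K →+* R5 k) s G := by
      simp only [Polynomial.eval₂_add, Polynomial.eval₂_mul, Polynomial.eval₂_C,
        Polynomial.eval₂_X, AlgHom.coe_toRingHom]
    rw [e2, hGe]
    rw [e3] at key1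
    linear_combination key1
  refine ⟨-(D + uu * (1 + ι c * hG)), ?_, ?_⟩
  · set T1 : Subalgebra k (R5 k) := Algebra.adjoin k (Set.range (ι : K → R5 k) ∪ {xx, uu})
      with hT1
    have hι1 : ∀ z : K, ι z ∈ T1 := fun z =>
      Algebra.subset_adjoin (Set.mem_union_left _ ⟨z, rfl⟩)
    have hxx1 : xx ∈ T1 := Algebra.subset_adjoin (Set.mem_union_right _ (Set.mem_insert _ _))
    have huu1 : uu ∈ T1 := Algebra.subset_adjoin (Set.mem_union_right _
      (Set.mem_insert_of_mem _ rfl))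
    have hs1 : s ∈ T1 := add_mem hxx1 (mul_mem (hι1 c) (evt T1 ι hι1 hxx1 p))
    have htt1 : tt ∈ T1 := mul_mem (pow_mem (hι1 c) m) huu1
    have hGdd1 : hG ∈ T1 := by
      refine Algebra.adjoin_le ?_ hGdd
      rintro z (⟨w, rfl⟩ | hz)
      · exact hι1 w
      rcases hz with rfl | hz
      · exact hs1
      rcases hz with rfl
      exact htt1
    exact neg_mem (add_mem (evt T1 ι hι1 hxx1 d) (mul_mem huu1
      (add_mem (one_mem T1) (mul_mem (hι1 c) hGdd1))))
  · intro T hιT hΦ hU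
    have hstt : s + tt ∈ T := hΦ
    have keyx : xx = Polynomial.eval₂ (ι : K →+* R5 k) (s + tt)
        (Polynomial.X + Polynomial.C c * G) + ι c ^ m * -(D + uu * (1 + ι c * hG)) := by
      rw [key3, httdef]
      ring
    have hxxT : xx ∈ T := by
      rw [keyx]
      exact add_mem (evt T ι hιT hstt _) (mul_mem (pow_mem (hιT c) m) hU)
    have hsT : s ∈ T := by
      rw [hsdef]
      exact add_mem hxxT (mul_mem (hιT c) (evt T ι hιT hxxT p))
    have httT : tt ∈ T := by
      have e : tt = s + tt - s := by ring
      rw [e]; exact sub_mem hstt hsT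
    have hGT : hG ∈ T := by
      refine Algebra.adjoin_le ?_ hGdd
      rintro z (⟨w, rfl⟩ | hz)
      · exact hιT w
      rcases hz with rfl | hz
      · exact hsT
      rcases hz with rfl
      exact httT
    have hDT : D ∈ T := evt T ι hιT hxxT d
    have huu1T : uu * (1 + ι c * hG) ∈ T := by
      have e : uu * (1 + ι c * hG) = -(-(D + uu * (1 + ι c * hG))) - D := by ring
      rw [e]
      exact sub_mem (neg_mem hU) hDT
    have hgeom := geom (ι c * hG) m
    have hid : uu = (uu * (1 + ι c * hG)) * (∑ i ∈ Finset.range m, (-(ι c * hG)) ^ i)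
        + (-1 : R5 k) ^ m * hG ^ m * tt := by
      have h3 : (-(ι c * hG)) ^ m = (-1 : R5 k) ^ m * (ι c) ^ m * hG ^ m := by
        rw [neg_pow, mul_pow]; ring
      calc uu = uu * ((1 + ι c * hG) * (∑ i ∈ Finset.range m, (-(ι c * hG)) ^ i))
            + uu * (-(ι c * hG)) ^ m := by rw [hgeom]; ring
        _ = (uu * (1 + ι c * hG)) * (∑ i ∈ Finset.range m, (-(ι c * hG)) ^ i)
            + (-1 : R5 k) ^ m * hG ^ m * tt := by rw [h3, httdef]; ring
    refine ⟨hxxT, ?_⟩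
    rw [hid]
    refine add_mem (mul_mem huu1T (Subalgebra.sum_mem T (fun i _ => pow_mem
      (neg_mem (mul_mem (hιT c) hGT)) i))) ?_
    exact mul_mem (mul_mem (pow_mem (neg_mem (one_mem T)) m) (pow_mem hGT m)) httT


/-- divisibility of the difference of two evaluations differing in one slot -/
lemma aeval_sub_dvd {B : Type*} [CommRing B] [Algebra k B] {l : ℕ} (f g : Fin l → B)
    (i : Fin l) (h : ∀ j, j ≠ i → f j = g j) (w : MvPolynomial (Fin l) k) :
    (f i - g i) ∣ (aeval f w - aeval g w) := by
  induction w using MvPolynomial.induction_on with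
  | C q => simp
  | add q r hq hr =>
    have : aeval f (q + r) - aeval g (q + r) = (aeval f q - aeval g q) + (aeval f r - aeval g r) := by
      simp only [map_add]; ring
    rw [this]; exact dvd_add hq hr
  | mul_X q j hq =>
    have e : aeval f (q * X j) - aeval g (q * X j)
        = (aeval f q - aeval g q) * f j + aeval g q * (f j - g j) := by
      simp only [map_mul, aeval_X]; ring
    rw [e]
    refine dvd_add (Dvd.dvd.mul_right hq _) ?_
    by_cases hj : j = i
    · subst hj; exact Dvd.dvd.mul_left dvd_rfl _
    · rw [h j hj, sub_self, mul_zero]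
      exact dvd_zero _

/-- compatibility of evaluation through `Polynomial (MvPolynomial (Fin 2) k)` -/
lemma compat3 (y0 y1 y2 : R5 k) (W : MvPolynomial (Fin 3) k) :
    Polynomial.eval₂ ((aeval ![y0, y1] : MvPolynomial (Fin 2) k →ₐ[k] R5 k) : _ →+* R5 k) y2
      (aeval ![Polynomial.C (X 0 : MvPolynomial (Fin 2) k), Polynomial.C (X 1), Polynomial.X] W)
      = aeval ![y0, y1, y2] W := by
  induction W using MvPolynomial.induction_on with
  | C q =>
    simp [Polynomial.algebraMap_apply, MvPolynomial.algebraMap_eq]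
  | add q r hq hr => simp only [map_add, Polynomial.eval₂_add, hq, hr]
  | mul_X q j hq =>
    rw [map_mul, Polynomial.eval₂_mul, hq, map_mul]
    congr 1
    fin_cases j <;> simp
  
/-- compatibility of evaluation through `Polynomial (MvPolynomial (Fin 3) k)` -/
lemma compat4 (y0 y1 y2 y3 : R5 k) (W : MvPolynomial (Fin 4) k) :
    Polynomial.eval₂
      ((aeval ![y0, y1, y3] : MvPolynomial (Fin 3) k →ₐ[k] R5 k) : _ →+* R5 k) y2
      (aeval ![Polynomial.C (X 0 : MvPolynomial (Fin 3) k), Polynomial.C (X 1), Polynomial.X,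
        Polynomial.C (X 2)] W)
      = aeval ![y0, y1, y2, y3] W := by
  induction W using MvPolynomial.induction_on with
  | C q =>
    simp [Polynomial.algebraMap_apply, MvPolynomial.algebraMap_eq]
  | add q r hq hr => simp only [map_add, Polynomial.eval₂_add, hq, hr]
  | mul_X q j hq =>
    rw [map_mul, Polynomial.eval₂_mul, hq, map_mul]
    congr 1
    fin_cases j <;> simp


end S11

/- STATEMENT 11: Q = a^m u - b^n v - P is a k[a,b]-variable when P(0,0,x) has degree 1. -/
open S11 in
/-- let `P ∈ k[a,b,x]` and `Q = aᵐu − bⁿv − P ∈ k[a,b,x,u,v]`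
(with `a = X 0`, `b = X 1`, `x = X 2`, `u = X 3`, `v = X 4` in `MvPolynomial (Fin 5) k`).
If `P(0,0,x) ∈ k[x]` has degree `1`, then `Q` is a `k[a,b]`-variable of `k[a,b,x,u,v]`:
there is a `k`-algebra automorphism fixing `a` and `b` and sending `x` to `Q`. -/
theorem stmt11 (k : Type) [Field k] (m n : ℕ) (hm : 1 ≤ m) (hn : 1 ≤ n)
    (P : MvPolynomial (Fin 3) k)
    (hP : (MvPolynomial.aeval ![0, 0, Polynomial.X] P : Polynomial k).degree = 1) :
    ∃ φ : MvPolynomial (Fin 5) k ≃ₐ[k] MvPolynomial (Fin 5) k,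
      φ (X 0) = X 0 ∧ φ (X 1) = X 1 ∧
      φ (X 2) = (X 0 : MvPolynomial (Fin 5) k) ^ m * X 3 - (X 1) ^ n * X 4
        - MvPolynomial.aeval ![X 0, X 1, X 2] P := by
  classical
  set p1 : Polynomial k := MvPolynomial.aeval ![0, 0, Polynomial.X] P with hp1def
  set α : k := p1.coeff 1 with hαdef
  set β : k := p1.coeff 0 with hβdef
  have hα : α ≠ 0 := Polynomial.coeff_ne_zero_of_eq_degree hP
  have hp1 : p1 = Polynomial.C α * Polynomial.X + Polynomial.C β :=
    Polynomial.eq_X_add_C_of_degree_le_one hP.le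
  -- splitting of P
  have hPid : MvPolynomial.aeval ![(X 0 : MvPolynomial (Fin 3) k), X 1, X 2] P = P := by
    have hv : ![(X 0 : MvPolynomial (Fin 3) k), X 1, X 2] = X := by
      funext i; fin_cases i <;> rfl
    rw [hv, aeval_X_left_apply]
  obtain ⟨P₁, hP₁⟩ : (X 0 : MvPolynomial (Fin 3) k) ∣
      (P - MvPolynomial.aeval ![0, X 1, X 2] P) := by
    have := aeval_sub_dvd (k := k) ![(X 0 : MvPolynomial (Fin 3) k), X 1, X 2] ![0, X 1, X 2] 0
      (by intro j hj; fin_cases j <;> first | rfl | exact absurd rfl hj) P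
    simpa only [Matrix.cons_val_zero, sub_zero, hPid] using this
  obtain ⟨P₂, hP₂⟩ : (X 1 : MvPolynomial (Fin 3) k) ∣
      (MvPolynomial.aeval ![0, X 1, X 2] P - MvPolynomial.aeval ![0, 0, X 2] P) := by
    have := aeval_sub_dvd (k := k) ![(0 : MvPolynomial (Fin 3) k), X 1, X 2] ![0, 0, X 2] 1
      (by intro j hj; fin_cases j <;> first | rfl | exact absurd rfl hj) P
    simpa only [Matrix.cons_val_one, Matrix.head_cons, Matrix.cons_val_zero, sub_zero] using this
  have hP00 : MvPolynomial.aeval ![(0 : MvPolynomial (Fin 3) k), 0, X 2] P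
      = MvPolynomial.C α * X 2 + MvPolynomial.C β := by
    have hc : (Polynomial.aeval (X 2 : MvPolynomial (Fin 3) k)) p1
        = MvPolynomial.aeval ![(0 : MvPolynomial (Fin 3) k), 0, X 2] P := by
      rw [hp1def, MvPolynomial.comp_aeval_apply,
        show (fun i => (Polynomial.aeval (X 2 : MvPolynomial (Fin 3) k)) (![0, 0, Polynomial.X] i))
          = ![0, 0, X 2] from by funext i; fin_cases i <;> simp]
    rw [← hc, hp1]
    simp [MvPolynomial.algebraMap_eq]
  have hsplit : P = MvPolynomial.C α * X 2 + MvPolynomial.C β + X 0 * P₁ + X 1 * P₂ := by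
    linear_combination hP₁ + hP₂ + hP00
  -- now move to the 5-variable ring
  set Q₁ : R5 k := aeval ![(X 0 : R5 k), X 1, X 2] P₁ with hQ₁def
  set Q₂ : R5 k := aeval ![(X 0 : R5 k), X 1, X 2] P₂ with hQ₂def
  have hPPsplit : aeval ![(X 0 : R5 k), X 1, X 2] P
      = MvPolynomial.C α * X 2 + MvPolynomial.C β + X 0 * Q₁ + X 1 * Q₂ := by
    have h := congrArg (aeval ![(X 0 : R5 k), X 1, X 2]) hsplit
    simpa only [map_add, map_mul, aeval_C, aeval_X, MvPolynomial.algebraMap_eq,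
      Matrix.cons_val_zero, Matrix.cons_val_one, Matrix.head_cons, Matrix.cons_val_two,
      Matrix.tail_cons, hQ₁def, hQ₂def] using h
  -- first Asanuma step : slot v
  set ι1 : MvPolynomial (Fin 2) k →ₐ[k] R5 k := aeval ![X 0, X 1] with hι1def
  set p2 : Polynomial (MvPolynomial (Fin 2) k) :=
    Polynomial.C (MvPolynomial.C α⁻¹) *
      aeval ![Polynomial.C (X 0 : MvPolynomial (Fin 2) k), Polynomial.C (X 1), Polynomial.X] P₂
    with hp2def
  have hQ2eval : Polynomial.eval₂ (ι1 : _ →+* R5 k) (X 2) p2 = MvPolynomial.C α⁻¹ * Q₂ := by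
    rw [hp2def, Polynomial.eval₂_mul, Polynomial.eval₂_C, compat3 (k := k) (X 0) (X 1) (X 2) P₂]
    rw [← hQ₂def]
    congr 1
    rw [hι1def]
    simp [MvPolynomial.algebraMap_eq]
  obtain ⟨U1, hU1adj, hU1ext⟩ := core (k := k) ι1 (X 1) n hn p2 (X 2) (X 4)
  set Φx1 : R5 k := X 2 + ι1 (X 1) * Polynomial.eval₂ (ι1 : _ →+* R5 k) (X 2) p2
      + ι1 (X 1) ^ n * X 4 with hΦx1def
  set σ1 : R5 k →ₐ[k] R5 k := aeval ![X 0, X 1, Φx1, X 3, U1] with hσ1def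
  have hσ10 : σ1 (X 0) = X 0 := by
    rw [hσ1def, aeval_X]; rfl
  have hσ11 : σ1 (X 1) = X 1 := by
    rw [hσ1def, aeval_X]; rfl
  have hσ12 : σ1 (X 2) = Φx1 := by
    rw [hσ1def, aeval_X]; rfl
  have hσ13 : σ1 (X 3) = X 3 := by
    rw [hσ1def, aeval_X]; rfl
  have hσ14 : σ1 (X 4) = U1 := by
    rw [hσ1def, aeval_X]; rfl
  have hι1mem : ∀ (T : Subalgebra k (R5 k)), X 0 ∈ T → X 1 ∈ T → ∀ z, ι1 z ∈ T := by
    intro T h0 h1 z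
    rw [hι1def]
    exact mvevt T ![X 0, X 1] (by intro i; fin_cases i; exacts [h0, h1]) z
  have hσ1surj : Function.Surjective σ1 := by
    apply surj_of_gens
    have h0 : (X 0 : R5 k) ∈ σ1.range := ⟨X 0, hσ10⟩
    have h1 : (X 1 : R5 k) ∈ σ1.range := ⟨X 1, hσ11⟩
    have h3 : (X 3 : R5 k) ∈ σ1.range := ⟨X 3, hσ13⟩
    have hext := hU1ext σ1.range (hι1mem _ h0 h1) ⟨X 2, hσ12⟩
      ⟨X 4, hσ14⟩
    intro i; fin_cases i; exacts [h0, h1, hext.1, h3, hext.2]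
  set Ψ : R5 k ≃ₐ[k] R5 k := AlgEquiv.ofBijective σ1 ⟨noeth_inj σ1 hσ1surj, hσ1surj⟩ with hΨdef
  have hΨapp : ∀ z, Ψ z = σ1 z := fun z => rfl
  -- the subalgebra of u-free elements
  set M : Subalgebra k (R5 k) := Algebra.adjoin k ({X 0, X 1, X 2, X 4} : Set (R5 k)) with hMdef
  have hM0 : (X 0 : R5 k) ∈ M := Algebra.subset_adjoin (by simp)
  have hM1 : (X 1 : R5 k) ∈ M := Algebra.subset_adjoin (by simp)
  have hM2 : (X 2 : R5 k) ∈ M := Algebra.subset_adjoin (by simp)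
  have hM4 : (X 4 : R5 k) ∈ M := Algebra.subset_adjoin (by simp)
  have hιM : ∀ z, ι1 z ∈ M := hι1mem M hM0 hM1
  have hΦx1M : Φx1 ∈ M := by
    rw [hΦx1def]
    exact add_mem (add_mem hM2 (mul_mem (hιM _) (evt M ι1 hιM hM2 p2)))
      (mul_mem (pow_mem (hιM _) n) hM4)
  have hU1M : U1 ∈ M := by
    refine Algebra.adjoin_le ?_ hU1adj
    rintro z (⟨w, rfl⟩ | hz)
    · exact hιM w
    rcases hz with rfl | hz
    · exact hM2
    rcases hz with rfl
    exact hM4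
  have hfix1 : ∀ z, σ1 (ι1 z) = ι1 z := by
    intro z
    rw [hι1def, MvPolynomial.comp_aeval_apply,
      show (fun i => σ1 (![(X 0 : R5 k), X 1] i)) = ![X 0, X 1] from by
        funext i; fin_cases i; exacts [hσ10, hσ11]]
  have hMeq : M.map σ1 = M := by
    apply le_antisymm
    · rw [hMdef, AlgHom.map_adjoin]
      refine Algebra.adjoin_le ?_
      rintro z ⟨w, hw, rfl⟩
      rcases hw with rfl | hw
      · rw [hσ10]; exact hM0
      rcases hw with rfl | hw
      · rw [hσ11]; exact hM1
      rcases hw with rfl | hw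
      · rw [hσ12]; exact hΦx1M
      rcases hw with rfl
      exact hσ14 ▸ hU1M
    · have hextM := hU1ext (M.map σ1)
        (fun z => Subalgebra.mem_map.mpr ⟨ι1 z, hιM z, hfix1 z⟩)
        (Subalgebra.mem_map.mpr ⟨X 2, hM2, hσ12⟩)
        (Subalgebra.mem_map.mpr ⟨X 4, hM4, hσ14⟩)
      rw [hMdef]
      refine Algebra.adjoin_le ?_
      rintro z (rfl | hz)
      · exact Subalgebra.mem_map.mpr ⟨X 0, hM0, hσ10⟩
      rcases hz with rfl | hz
      · exact Subalgebra.mem_map.mpr ⟨X 1, hM1, hσ11⟩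
      rcases hz with rfl | hz
      · exact hextM.1
      rcases hz with rfl
      exact hextM.2
  -- the perturbation for the second step
  set G₁ : R5 k := MvPolynomial.C α⁻¹ * Q₁ with hG₁def
  have hG₁M : G₁ ∈ M := by
    rw [hG₁def]
    refine mul_mem ?_ ?_
    · rw [← MvPolynomial.algebraMap_eq]; exact M.algebraMap_mem α⁻¹
    · rw [hQ₁def]
      exact mvevt M ![X 0, X 1, X 2] (by intro i; fin_cases i; exacts [hM0, hM1, hM2]) P₁
  have hG₁map : G₁ ∈ M.map σ1 := by rw [hMeq]; exact hG₁M
  obtain ⟨w1, hw1M, hw1⟩ := Subalgebra.mem_map.mp hG₁map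
  set pR : R5 k := Ψ.symm G₁ with hpRdef
  have hpRw1 : pR = w1 := by
    rw [hpRdef, ← hw1, show σ1 w1 = Ψ w1 from rfl, AlgEquiv.symm_apply_apply]
  have hpRM : pR ∈ M := by rw [hpRw1]; exact hw1M
  have hΨpR : σ1 pR = G₁ := by
    rw [show σ1 pR = Ψ pR from rfl, hpRdef, AlgEquiv.apply_symm_apply]
  obtain ⟨W4, hW4⟩ : ∃ W4 : MvPolynomial (Fin 4) k,
      aeval ![(X 0 : R5 k), X 1, X 2, X 4] W4 = pR := by
    have hle : M ≤ (aeval ![(X 0 : R5 k), X 1, X 2, X 4]).range := by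
      rw [hMdef]
      refine Algebra.adjoin_le ?_
      rintro z (rfl | hz)
      · exact ⟨X 0, by simp⟩
      rcases hz with rfl | hz
      · exact ⟨X 1, by simp⟩
      rcases hz with rfl | hz
      · exact ⟨X 2, by simp⟩
      rcases hz with rfl
      exact ⟨X 3, by simp⟩
    exact hle hpRM
  -- second Asanuma step : slot u
  set ι2 : MvPolynomial (Fin 3) k →ₐ[k] R5 k := aeval ![X 0, X 1, X 4] with hι2def
  set p3 : Polynomial (MvPolynomial (Fin 3) k) :=
    aeval ![Polynomial.C (X 0 : MvPolynomial (Fin 3) k), Polynomial.C (X 1), Polynomial.X,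
      Polynomial.C (X 2)] W4 with hp3def
  have hp3eval : Polynomial.eval₂ (ι2 : _ →+* R5 k) (X 2) p3 = pR := by
    rw [hp3def, hι2def, compat4 (k := k) (X 0) (X 1) (X 2) (X 4) W4]
    exact hW4
  obtain ⟨U2, hU2adj, hU2ext⟩ := core (k := k) ι2 (X 0) m hm p3 (X 2) (X 3)
  set Φx2 : R5 k := X 2 + ι2 (X 0) * Polynomial.eval₂ (ι2 : _ →+* R5 k) (X 2) p3
      + ι2 (X 0) ^ m * X 3 with hΦx2def
  set σ2 : R5 k →ₐ[k] R5 k := aeval ![X 0, X 1, Φx2, U2, X 4] with hσ2def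
  have hσ20 : σ2 (X 0) = X 0 := by rw [hσ2def, aeval_X]; rfl
  have hσ21 : σ2 (X 1) = X 1 := by rw [hσ2def, aeval_X]; rfl
  have hσ22 : σ2 (X 2) = Φx2 := by rw [hσ2def, aeval_X]; rfl
  have hσ23 : σ2 (X 3) = U2 := by rw [hσ2def, aeval_X]; rfl
  have hσ24 : σ2 (X 4) = X 4 := by rw [hσ2def, aeval_X]; rfl
  have hι2mem : ∀ (T : Subalgebra k (R5 k)), X 0 ∈ T → X 1 ∈ T → X 4 ∈ T → ∀ z, ι2 z ∈ T := by
    intro T h0 h1 h4 z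
    rw [hι2def]
    exact mvevt T ![X 0, X 1, X 4] (by intro i; fin_cases i; exacts [h0, h1, h4]) z
  have hσ2surj : Function.Surjective σ2 := by
    apply surj_of_gens
    have h0 : (X 0 : R5 k) ∈ σ2.range := ⟨X 0, hσ20⟩
    have h1 : (X 1 : R5 k) ∈ σ2.range := ⟨X 1, hσ21⟩
    have h4 : (X 4 : R5 k) ∈ σ2.range := ⟨X 4, hσ24⟩
    have hext := hU2ext σ2.range (hι2mem _ h0 h1 h4) ⟨X 2, hσ22⟩
      ⟨X 3, hσ23⟩
    intro i; fin_cases i; exacts [h0, h1, hext.1, hext.2, h4]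
  set Θ : R5 k ≃ₐ[k] R5 k := AlgEquiv.ofBijective σ2 ⟨noeth_inj σ2 hσ2surj, hσ2surj⟩ with hΘdef
  -- affine scalings
  have hCmul : ∀ c d : k, (MvPolynomial.C c : R5 k) * MvPolynomial.C d = MvPolynomial.C (c * d) :=
    fun c d => by rw [← map_mul]
  set σ3 : R5 k →ₐ[k] R5 k :=
    aeval ![X 0, X 1, -(MvPolynomial.C α) * X 2 - MvPolynomial.C β, X 3, X 4] with hσ3def
  set σ4 : R5 k →ₐ[k] R5 k :=
    aeval ![X 0, X 1, X 2, -(MvPolynomial.C α⁻¹) * X 3, MvPolynomial.C α⁻¹ * X 4] with hσ4def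
  have hσ30 : σ3 (X 0) = X 0 := by rw [hσ3def, aeval_X]; rfl
  have hσ31 : σ3 (X 1) = X 1 := by rw [hσ3def, aeval_X]; rfl
  have hσ32 : σ3 (X 2) = -(MvPolynomial.C α) * X 2 - MvPolynomial.C β := by
    rw [hσ3def, aeval_X]; rfl
  have hσ33 : σ3 (X 3) = X 3 := by rw [hσ3def, aeval_X]; rfl
  have hσ34 : σ3 (X 4) = X 4 := by rw [hσ3def, aeval_X]; rfl
  have hσ40 : σ4 (X 0) = X 0 := by rw [hσ4def, aeval_X]; rfl
  have hσ41 : σ4 (X 1) = X 1 := by rw [hσ4def, aeval_X]; rfl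
  have hσ42 : σ4 (X 2) = X 2 := by rw [hσ4def, aeval_X]; rfl
  have hσ43 : σ4 (X 3) = -(MvPolynomial.C α⁻¹) * X 3 := by rw [hσ4def, aeval_X]; rfl
  have hσ44 : σ4 (X 4) = MvPolynomial.C α⁻¹ * X 4 := by rw [hσ4def, aeval_X]; rfl
  have hCfix : ∀ (f : R5 k →ₐ[k] R5 k) (c : k), f (MvPolynomial.C c) = MvPolynomial.C c := by
    intro f c
    rw [← MvPolynomial.algebraMap_eq]
    exact f.commutes c
  have hσ3surj : Function.Surjective σ3 := by
    have h2mem : (X 2 : R5 k) ∈ σ3.range := by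
      refine ⟨-(MvPolynomial.C α⁻¹) * X 2 - MvPolynomial.C (α⁻¹ * β), ?_⟩
      simp only [map_sub, map_mul, map_neg, AlgHom.toRingHom_eq_coe, AlgHom.coe_toRingHom, hCfix σ3, hσ32]
      have h1 : (MvPolynomial.C α⁻¹ : R5 k) * MvPolynomial.C α = 1 := by
        rw [hCmul, inv_mul_cancel₀ hα, map_one]
      linear_combination (X 2 : R5 k) * h1
    apply surj_of_gens
    intro i
    fin_cases i
    exacts [⟨X 0, hσ30⟩, ⟨X 1, hσ31⟩, h2mem, ⟨X 3, hσ33⟩, ⟨X 4, hσ34⟩]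
  have hσ4surj : Function.Surjective σ4 := by
    have h1 : (MvPolynomial.C α : R5 k) * MvPolynomial.C α⁻¹ = 1 := by
      rw [hCmul, mul_inv_cancel₀ hα, map_one]
    have h3mem : (X 3 : R5 k) ∈ σ4.range := by
      refine ⟨-(MvPolynomial.C α) * X 3, ?_⟩
      simp only [map_mul, map_neg, AlgHom.toRingHom_eq_coe, AlgHom.coe_toRingHom, hCfix σ4, hσ43]
      linear_combination (X 3 : R5 k) * h1
    have h4mem : (X 4 : R5 k) ∈ σ4.range := by
      refine ⟨MvPolynomial.C α * X 4, ?_⟩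
      simp only [map_mul, AlgHom.toRingHom_eq_coe, AlgHom.coe_toRingHom, hCfix σ4, hσ44]
      linear_combination (X 4 : R5 k) * h1
    apply surj_of_gens
    intro i
    fin_cases i
    exacts [⟨X 0, hσ40⟩, ⟨X 1, hσ41⟩, ⟨X 2, hσ42⟩, h3mem, h4mem]
  set ρ : R5 k ≃ₐ[k] R5 k := AlgEquiv.ofBijective σ3 ⟨noeth_inj σ3 hσ3surj, hσ3surj⟩ with hρdef
  set ρ' : R5 k ≃ₐ[k] R5 k := AlgEquiv.ofBijective σ4 ⟨noeth_inj σ4 hσ4surj, hσ4surj⟩ with hρ'def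
  -- assemble
  refine ⟨ρ.trans (Θ.trans (Ψ.trans ρ')), ?_, ?_, ?_⟩
  · show σ4 (σ1 (σ2 (σ3 (X 0)))) = X 0
    rw [hσ30, hσ20, hσ10, hσ40]
  · show σ4 (σ1 (σ2 (σ3 (X 1)))) = X 1
    rw [hσ31, hσ21, hσ11, hσ41]
  · show σ4 (σ1 (σ2 (σ3 (X 2)))) = _
    have hΦx2' : Φx2 = X 2 + X 0 * pR + X 0 ^ m * X 3 := by
      rw [hΦx2def, hp3eval, hι2def, aeval_X]
      rfl
    have hΦx1' : Φx1 = X 2 + X 1 * (MvPolynomial.C α⁻¹ * Q₂) + X 1 ^ n * X 4 := by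
      rw [hΦx1def, hQ2eval, hι1def, aeval_X]
      rfl
    have hfixQ : ∀ W : MvPolynomial (Fin 3) k,
        σ4 (aeval ![(X 0 : R5 k), X 1, X 2] W) = aeval ![(X 0 : R5 k), X 1, X 2] W := by
      intro W
      rw [MvPolynomial.comp_aeval_apply,
        show (fun i => σ4 (![(X 0 : R5 k), X 1, X 2] i)) = ![X 0, X 1, X 2] from by
          funext i; fin_cases i; exacts [hσ40, hσ41, hσ42]]
    have hσ4Q₁ : σ4 Q₁ = Q₁ := by rw [hQ₁def]; exact hfixQ P₁
    have hσ4Q₂ : σ4 Q₂ = Q₂ := by rw [hQ₂def]; exact hfixQ P₂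
    have hσ4G₁ : σ4 G₁ = MvPolynomial.C α⁻¹ * Q₁ := by
      rw [hG₁def, map_mul, hCfix σ4, hσ4Q₁]
    -- push σ3
    rw [hσ32]
    -- push σ2
    simp only [map_sub, map_mul, map_neg, AlgHom.toRingHom_eq_coe, AlgHom.coe_toRingHom, hCfix σ2, hσ22]
    rw [hΦx2']
    -- push σ1
    simp only [map_sub, map_neg, map_add, map_mul, map_pow, AlgHom.toRingHom_eq_coe, AlgHom.coe_toRingHom, hCfix σ1,
      hσ10, hσ12, hσ13, hΨpR]
    rw [hΦx1']
    -- push σ4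
    simp only [map_sub, map_neg, map_add, map_mul, map_pow, AlgHom.toRingHom_eq_coe, AlgHom.coe_toRingHom, hCfix σ4,
      hσ40, hσ41, hσ42, hσ43, hσ44, hσ4G₁, hσ4Q₁, hσ4Q₂]
    rw [hPPsplit]
    have h1 : (MvPolynomial.C α : R5 k) * MvPolynomial.C α⁻¹ = 1 := by
      rw [hCmul, mul_inv_cancel₀ hα, map_one]
    linear_combination (X 0 ^ m * X 3 - X 1 ^ n * X 4 - X 0 * Q₁ - X 1 * Q₂) * h1
end
end

section
/- Let k be a field and P ∈ k[b,x] with P ∉ b·k[b,x] (i.e. P(0,x) ≠ 0). Set u = (bⁿy + P)/a ∈ k[a^{±1},b][x,y] for some n ≥ 1. Then k[a^{±1},b][x,y] ∩ k[a,b^{±1}][x,u] = k[a,b,x,y,u], where the intersection is taken inside k(a,b,x,y). -/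
set_option maxHeartbeats 1000000

noncomputable section
open MvPolynomial

namespace Stmt14

variable (k : Type) [Field k] (n : ℕ) (P : MvPolynomial (Fin 2) k)

abbrev S0 : Type := MvPolynomial (Fin 3) k
abbrev T : Type := Polynomial (S0 k)

def q0 : S0 k := (X 0) ^ n * X 2 + aeval ![X 0, X 1] P

def II : Ideal (T k) := Ideal.span {Polynomial.X, Polynomial.C (q0 k n P)}

def φb : S0 k →ₐ[k] S0 k := aeval ![0, X 1, X 2]

def Jmem (d : ℕ) (g : T k) : Prop :=
  ∃ (f : T k) (h : ℕ → S0 k),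
    g = f * Polynomial.X ^ d +
      ∑ j ∈ Finset.range d, Polynomial.monomial j ((q0 k n P) ^ (d - j) * h j)

variable {k n P}

lemma Jmem_add {d : ℕ} {g₁ g₂ : T k} (h₁ : Jmem k n P d g₁) (h₂ : Jmem k n P d g₂) :
    Jmem k n P d (g₁ + g₂) := by
  obtain ⟨f₁, h₁', rfl⟩ := h₁
  obtain ⟨f₂, h₂', rfl⟩ := h₂
  refine ⟨f₁ + f₂, fun j => h₁' j + h₂' j, ?_⟩
  simp only [mul_add, map_add, Finset.sum_add_distrib]
  ring

lemma Jmem_zero (d : ℕ) : Jmem k n P d 0 :=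
  ⟨0, fun _ => 0, by simp⟩

lemma Jmem_sum {ι : Type} {d : ℕ} (s : Finset ι) (F : ι → T k)
    (h : ∀ i ∈ s, Jmem k n P d (F i)) : Jmem k n P d (∑ i ∈ s, F i) := by
  classical
  induction s using Finset.induction_on with
  | empty => simpa using Jmem_zero d
  | insert a s hx ih =>
    rw [Finset.sum_insert hx]
    exact Jmem_add (h _ (Finset.mem_insert_self _ _))
      (ih fun i hi => h i (Finset.mem_insert_of_mem hi))

lemma Jmem_fX (f : T k) (d : ℕ) : Jmem k n P d (f * Polynomial.X ^ d) :=
  ⟨f, fun _ => 0, by simp⟩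

lemma Jmem_monomial_lt {d j : ℕ} (hj : j < d) (c : S0 k) :
    Jmem k n P d (Polynomial.monomial j ((q0 k n P) ^ (d - j) * c)) := by
  classical
  refine ⟨0, fun j' => if j' = j then c else 0, ?_⟩
  rw [zero_mul, zero_add]
  rw [Finset.sum_eq_single j]
  · simp
  · intro j' _ hne; simp [hne]
  · intro h; exact absurd (Finset.mem_range.2 hj) h

lemma monomial_mul_X_pow (m d : ℕ) (c : S0 k) :
    Polynomial.monomial m c * Polynomial.X ^ d = Polynomial.monomial (m + d) c := by
  rw [← Polynomial.C_mul_X_pow_eq_monomial, ← Polynomial.C_mul_X_pow_eq_monomial,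
    mul_assoc, ← pow_add]

lemma Jmem_mul_left (r : T k) {d : ℕ} {g : T k} (hg : Jmem k n P d g) :
    Jmem k n P d (r * g) := by
  induction r using Polynomial.induction_on' with
  | add p q hp hq => rw [add_mul]; exact Jmem_add hp hq
  | monomial e c =>
    obtain ⟨f, h, rfl⟩ := hg
    rw [mul_add, Finset.mul_sum]
    apply Jmem_add
    · rw [← mul_assoc]; exact Jmem_fX _ _
    · apply Jmem_sum
      intro j hj
      rw [Finset.mem_range] at hj
      rw [Polynomial.monomial_mul_monomial]
      by_cases hc : e + j < d
      · have hco : c * ((q0 k n P) ^ (d - j) * h j)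
            = (q0 k n P) ^ (d - (e + j)) * ((q0 k n P) ^ e * (c * h j)) := by
          have he : d - j = (d - (e + j)) + e := by omega
          rw [he, pow_add]; ring
        rw [hco]
        exact Jmem_monomial_lt hc _
      · have he : e + j = (e + j - d) + d := by omega
        rw [he, ← monomial_mul_X_pow]
        exact Jmem_fX _ _

lemma Jmem_mul_X {d : ℕ} {g : T k} (hg : Jmem k n P d g) :
    Jmem k n P (d + 1) (g * Polynomial.X) := by
  obtain ⟨f, h, rfl⟩ := hg
  refine ⟨f, fun j' => if j' = 0 then 0 else h (j' - 1), ?_⟩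
  rw [add_mul, Finset.sum_mul, mul_assoc, ← pow_succ]
  congr 1
  rw [Finset.sum_range_succ']
  have h0 : Polynomial.monomial 0 ((q0 k n P) ^ (d + 1 - 0) * if (0:ℕ) = 0 then 0 else h (0-1))
      = (0 : T k) := by simp
  rw [h0, add_zero]
  apply Finset.sum_congr rfl
  intro j hj
  rw [Finset.mem_range] at hj
  have : Polynomial.monomial j ((q0 k n P) ^ (d - j) * h j) * Polynomial.X
      = Polynomial.monomial (j + 1) ((q0 k n P) ^ (d - j) * h j) := by
    rw [← pow_one (Polynomial.X : T k), monomial_mul_X_pow]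
  rw [this]
  have he : d + 1 - (j + 1) = d - j := by omega
  simp [he]

lemma Jmem_mul_Cq {d : ℕ} {g : T k} (hg : Jmem k n P d g) :
    Jmem k n P (d + 1) (g * Polynomial.C (q0 k n P)) := by
  obtain ⟨f, h, rfl⟩ := hg
  rw [add_mul, Finset.sum_mul]
  apply Jmem_add
  · -- f * X^d * C q0
    have key : f * Polynomial.X ^ d * Polynomial.C (q0 k n P)
        = (f.divX * Polynomial.C (q0 k n P)) * Polynomial.X ^ (d + 1)
            + Polynomial.monomial d ((q0 k n P) ^ (d + 1 - d) * f.coeff 0) := by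
      conv_lhs => rw [← Polynomial.divX_mul_X_add f]
      rw [← Polynomial.C_mul_X_pow_eq_monomial]
      have h1 : d + 1 - d = 1 := by omega
      rw [h1, pow_one, pow_succ, map_mul]
      ring
    rw [key]
    exact Jmem_add (Jmem_fX _ _) (Jmem_monomial_lt (by omega) _)
  · apply Jmem_sum
    intro j hj
    rw [Finset.mem_range] at hj
    have key : Polynomial.monomial j ((q0 k n P) ^ (d - j) * h j) * Polynomial.C (q0 k n P)
        = Polynomial.monomial j ((q0 k n P) ^ (d + 1 - j) * h j) := by
      rw [mul_comm, Polynomial.C_mul_monomial]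
      have h1 : d + 1 - j = (d - j) + 1 := by omega
      rw [h1, pow_succ]
      ring_nf
    rw [key]
    exact Jmem_monomial_lt (by omega) _

lemma Jmem_of_mem_pow {d : ℕ} {g : T k} (hg : g ∈ (II k n P) ^ d) : Jmem k n P d g := by
  induction d generalizing g with
  | zero =>
    exact ⟨g, fun _ => 0, by simp⟩
  | succ d ih =>
    rw [pow_succ (M := Ideal (T k))] at hg
    refine Submodule.mul_induction_on hg (fun p hp s hs => ?_) (fun x y hx hy => Jmem_add hx hy)
    obtain ⟨r₁, r₂, rfl⟩ := Ideal.mem_span_pair.mp hs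
    have key : p * (r₁ * Polynomial.X + r₂ * Polynomial.C (q0 k n P))
        = r₁ * (p * Polynomial.X) + r₂ * (p * Polynomial.C (q0 k n P)) := by ring
    rw [key]
    exact Jmem_add (Jmem_mul_left _ (Jmem_mul_X (ih hp)))
      (Jmem_mul_left _ (Jmem_mul_Cq (ih hp)))

lemma X_mem_II : (Polynomial.X : T k) ∈ II k n P :=
  Ideal.subset_span (Set.mem_insert _ _)

lemma Cq0_mem_II : (Polynomial.C (q0 k n P) : T k) ∈ II k n P :=
  Ideal.subset_span (Set.mem_insert_of_mem _ rfl)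

lemma mem_pow_of_Jmem {d : ℕ} {g : T k} (hg : Jmem k n P d g) : g ∈ (II k n P) ^ d := by
  obtain ⟨f, h, rfl⟩ := hg
  apply add_mem
  · exact Ideal.mul_mem_left _ f (Ideal.pow_mem_pow X_mem_II d)
  · apply sum_mem
    intro j hj
    rw [Finset.mem_range] at hj
    have key : Polynomial.monomial j ((q0 k n P) ^ (d - j) * h j)
        = (Polynomial.X ^ j * (Polynomial.C (q0 k n P)) ^ (d - j)) * Polynomial.C (h j) := by
      rw [← Polynomial.C_mul_X_pow_eq_monomial, map_mul, map_pow]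
      ring
    rw [key]
    have hmem : Polynomial.X ^ j * (Polynomial.C (q0 k n P)) ^ (d - j) ∈ (II k n P) ^ d := by
      have h1 := Ideal.mul_mem_mul (Ideal.pow_mem_pow (X_mem_II (k:=k) (n:=n) (P:=P)) j)
        (Ideal.pow_mem_pow (Cq0_mem_II (k:=k) (n:=n) (P:=P)) (d - j))
      rw [← pow_add (M := Ideal (T k))] at h1
      have hd : j + (d - j) = d := by omega
      rwa [hd] at h1
    exact Ideal.mul_mem_right _ _ hmem

lemma X0_dvd_sub_φb (h : S0 k) : (X 0 : S0 k) ∣ (h - φb k h) := by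
  induction h using MvPolynomial.induction_on with
  | C a => simp [φb, aeval_C, Algebra.algebraMap_eq_smul_one]
  | add p q hp hq =>
    have : p + q - φb k (p + q) = (p - φb k p) + (q - φb k q) := by
      rw [map_add]; ring
    rw [this]; exact dvd_add hp hq
  | mul_X p i hp =>
    have key : p * X i - φb k (p * X i)
        = (p - φb k p) * X i + φb k p * (X i - φb k (X i)) := by
      rw [map_mul]; ring
    rw [key]
    apply dvd_add
    · exact Dvd.dvd.mul_right hp _
    · apply Dvd.dvd.mul_left
      fin_cases i <;> simp [φb]

lemma X0_dvd_of_φb_eq_zero {h : S0 k} (h0 : φb k h = 0) : (X 0 : S0 k) ∣ h := by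
  have := X0_dvd_sub_φb (k := k) h
  rwa [h0, sub_zero] at this

lemma φb_X0 : φb k (X 0 : S0 k) = 0 := by simp [φb]

variable (k n P) in
def Pbar : S0 k := aeval ![0, X 1] P

lemma φb_q0 (hn : 1 ≤ n) : φb k (q0 k n P) = Pbar k P := by
  rw [q0, map_add, map_mul, map_pow, φb_X0, zero_pow (by omega : n ≠ 0), zero_mul, zero_add]
  rw [Pbar]
  have hc : (φb k) ((aeval ![X 0, X 1]) P) = (aeval fun i => (φb k) (![X 0, X 1] i)) P := by
    simpa using DFunLike.congr_fun (MvPolynomial.comp_aeval (![X 0, X 1]) (φb k)) P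
  rw [hc]
  have hfun : (fun i => (φb k) (![X 0, X 1] i)) = ![0, X 1] := by
    funext i; fin_cases i <;> simp [φb]
  rw [hfun]

lemma Pbar_ne (hP : (MvPolynomial.aeval ![0, Polynomial.X] P : Polynomial k) ≠ 0) :
    Pbar k P ≠ 0 := by
  intro h0
  apply hP
  have h1 : (aeval ![0, Polynomial.X, 0] : S0 k →ₐ[k] Polynomial k) (Pbar k P)
      = aeval ![0, Polynomial.X] P := by
    rw [Pbar]
    have hc : (aeval ![0, Polynomial.X, 0] : S0 k →ₐ[k] Polynomial k) ((aeval ![0, X 1]) P)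
        = (aeval fun i => (aeval ![0, Polynomial.X, 0] : S0 k →ₐ[k] Polynomial k)
            ((![0, X 1] : Fin 2 → S0 k) i)) P := by
      simpa using DFunLike.congr_fun
        (MvPolynomial.comp_aeval (![0, X 1] : Fin 2 → S0 k)
          (aeval ![0, Polynomial.X, 0] : S0 k →ₐ[k] Polynomial k)) P
    rw [hc]
    have hfun : (fun i => (aeval ![0, Polynomial.X, 0] : S0 k →ₐ[k] Polynomial k)
        ((![0, X 1] : Fin 2 → S0 k) i)) = ![0, Polynomial.X] := by
      funext i; fin_cases i <;> simp
    rw [hfun]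
  rw [← h1, h0, map_zero]

lemma claim2 {d : ℕ} {g : T k} (hn : 1 ≤ n)
    (hP : (MvPolynomial.aeval ![0, Polynomial.X] P : Polynomial k) ≠ 0)
    (hJ : Jmem k n P d g) (h0 : g.map (φb k).toRingHom = 0) :
    ∃ g' : T k, g = Polynomial.C (X 0) * g' ∧ Jmem k n P d g' := by
  classical
  obtain ⟨f, h, rfl⟩ := hJ
  rw [Polynomial.map_add, Polynomial.map_mul, Polynomial.map_pow, Polynomial.map_X,
    Polynomial.map_sum] at h0
  simp only [Polynomial.map_monomial] at h0
  -- coefficients of h vanish under φb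
  have hcoeff : ∀ j < d, φb k ((q0 k n P) ^ (d - j) * h j) = 0 := by
    intro j hj
    have := congrArg (fun p => Polynomial.coeff p j) h0
    simp only [Polynomial.coeff_add, Polynomial.coeff_zero, Polynomial.finset_sum_coeff,
      Polynomial.coeff_monomial, Polynomial.coeff_mul_X_pow'] at this
    rw [if_neg (by omega : ¬ d ≤ j), zero_add,
      Finset.sum_ite_eq' (Finset.range d) j, if_pos (Finset.mem_range.2 hj)] at this
    simpa using this
  have hh : ∀ j < d, φb k (h j) = 0 := by
    intro j hj
    have := hcoeff j hj
    rw [map_mul, map_pow, φb_q0 hn] at this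
    rcases mul_eq_zero.mp this with h' | h'
    · exact absurd h' (pow_ne_zero _ (Pbar_ne hP))
    · exact h'
  have hf : ∀ e, φb k (f.coeff e) = 0 := by
    intro e
    have := congrArg (fun p => Polynomial.coeff p (e + d)) h0
    simp only [Polynomial.coeff_add, Polynomial.coeff_zero, Polynomial.finset_sum_coeff,
      Polynomial.coeff_monomial, Polynomial.coeff_mul_X_pow'] at this
    rw [if_pos (by omega : d ≤ e + d), Finset.sum_eq_zero (fun j hj => by
      rw [Finset.mem_range] at hj
      rw [if_neg (by omega : ¬ j = e + d)]), add_zero] at this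
    have he : e + d - d = e := by omega
    rw [he, Polynomial.coeff_map] at this
    simpa using this
  -- divide f by X 0
  have hfd : ∀ e, ∃ c, f.coeff e = X 0 * c :=
    fun e => X0_dvd_of_φb_eq_zero (hf e)
  have hhd : ∀ j, ∃ c, (if j < d then h j else 0) = X 0 * c := by
    intro j
    by_cases hj : j < d
    · rw [if_pos hj]; exact X0_dvd_of_φb_eq_zero (hh j hj)
    · exact ⟨0, by simp [hj]⟩
  set f' : T k := ∑ e ∈ f.support, Polynomial.monomial e (Classical.choose (hfd e)) with hf'
  set h' : ℕ → S0 k := fun j => Classical.choose (hhd j) with hh'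
  refine ⟨f' * Polynomial.X ^ d +
    ∑ j ∈ Finset.range d, Polynomial.monomial j ((q0 k n P) ^ (d - j) * h' j), ?_, f', h', rfl⟩
  rw [mul_add, Finset.mul_sum, ← mul_assoc]
  refine congrArg₂ (· + ·) ?_ ?_
  · refine congrArg (· * Polynomial.X ^ d) ?_
    symm
    calc Polynomial.C (X 0 : S0 k) * f'
        = ∑ e ∈ f.support, Polynomial.monomial e (f.coeff e) := by
          rw [hf', Finset.mul_sum]
          refine Finset.sum_congr rfl fun e _ => ?_
          rw [Polynomial.C_mul_monomial]
          exact congrArg _ (Classical.choose_spec (hfd e)).symm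
      _ = f := (Polynomial.as_sum_support f).symm
  · refine Finset.sum_congr rfl fun j hj => ?_
    rw [Finset.mem_range] at hj
    rw [Polynomial.C_mul_monomial]
    refine congrArg (Polynomial.monomial j) ?_
    have hspec : h j = X 0 * h' j :=
      ((if_pos hj).symm).trans (Classical.choose_spec (hhd j))
    rw [hspec]; ring

variable (k) in
def EE : MvPolynomial (Fin 4) k ≃ₐ[k] T k := MvPolynomial.finSuccEquiv k 3

variable (k) in
def ιT : T k →ₐ[k] K4 k :=
  (IsScalarTower.toAlgHom k (MvPolynomial (Fin 4) k) (K4 k)).comp (EE k).symm.toAlgHom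

lemma ιT_inj : Function.Injective (ιT k) := by
  have h1 : Function.Injective (algebraMap (MvPolynomial (Fin 4) k) (K4 k)) :=
    IsFractionRing.injective _ _
  have h2 : Function.Injective ((EE k).symm : T k → MvPolynomial (Fin 4) k) :=
    (EE k).symm.injective
  exact h1.comp h2

lemma ιT_X : ιT k Polynomial.X = av k := by
  have h1 : (EE k).symm Polynomial.X = X 0 := by
    rw [← MvPolynomial.finSuccEquiv_X_zero (R := k) (n := 3)]
    exact (EE k).symm_apply_apply _
  show algebraMap _ _ ((EE k).symm Polynomial.X) = av k
  rw [h1]; rfl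

lemma ιT_C (i : Fin 3) :
    ιT k (Polynomial.C (X i)) = algebraMap (MvPolynomial (Fin 4) k) (K4 k) (X i.succ) := by
  have h1 : (EE k).symm (Polynomial.C (X i)) = X i.succ := by
    rw [← MvPolynomial.finSuccEquiv_X_succ (R := k) (n := 3) (j := i)]
    exact (EE k).symm_apply_apply _
  show algebraMap _ _ ((EE k).symm (Polynomial.C (X i))) = _
  rw [h1]

lemma ιT_C0 : ιT k (Polynomial.C (X 0)) = bv k := by
  rw [ιT_C]; rfl

lemma ιT_C1 : ιT k (Polynomial.C (X 1)) = xv k := by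
  rw [ιT_C]; rfl

lemma ιT_C2 : ιT k (Polynomial.C (X 2)) = yv k := by
  rw [ιT_C]; rfl

variable (k) in
def ιC : S0 k →ₐ[k] K4 k := (ιT k).comp (IsScalarTower.toAlgHom k (S0 k) (T k))

lemma ιC_apply (s : S0 k) : ιC k s = ιT k (Polynomial.C s) := rfl

lemma av_ne : av k ≠ 0 := by
  rw [av, map_ne_zero_iff _ (IsFractionRing.injective _ _)]
  exact MvPolynomial.X_ne_zero _

lemma bv_ne : bv k ≠ 0 := by
  rw [bv, map_ne_zero_iff _ (IsFractionRing.injective _ _)]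
  exact MvPolynomial.X_ne_zero _

lemma ιT_Cq0 : ιT k (Polynomial.C (q0 k n P)) = (bv k) ^ n * yv k + aeval ![bv k, xv k] P := by
  rw [← ιC_apply, q0, map_add, map_mul, map_pow]
  rw [ιC_apply, ιC_apply, ιT_C0, ιT_C2]
  congr 1
  have hc : (ιC k) ((aeval ![X 0, X 1]) P) = (aeval fun i => (ιC k) (![X 0, X 1] i)) P := by
    simpa using DFunLike.congr_fun (MvPolynomial.comp_aeval (![X 0, X 1]) (ιC k)) P
  rw [hc]
  have hfun : (fun i => (ιC k) ((![X 0, X 1] : Fin 2 → S0 k) i)) = ![bv k, xv k] := by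
    funext i
    fin_cases i
    · show ιC k (X 0) = bv k
      rw [ιC_apply, ιT_C0]
    · show ιC k (X 1) = xv k
      rw [ιC_apply, ιT_C1]
  rw [hfun]

variable (k n P) in
def uv : K4 k := ((bv k) ^ n * yv k + aeval ![bv k, xv k] P) / av k

lemma av_uv : av k * uv k n P = ιT k (Polynomial.C (q0 k n P)) := by
  rw [ιT_Cq0, uv, mul_div_cancel₀ _ av_ne]

variable (k n P) in
def AA : Subalgebra k (K4 k) :=
  Algebra.adjoin k {av k, bv k, xv k, yv k, uv k n P}

lemma av_mem_AA : av k ∈ AA k n P :=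
  Algebra.subset_adjoin (Set.mem_insert _ _)
lemma bv_mem_AA : bv k ∈ AA k n P :=
  Algebra.subset_adjoin (Set.mem_insert_of_mem _ (Set.mem_insert _ _))
lemma xv_mem_AA : xv k ∈ AA k n P :=
  Algebra.subset_adjoin (Set.mem_insert_of_mem _ (Set.mem_insert_of_mem _ (Set.mem_insert _ _)))
lemma yv_mem_AA : yv k ∈ AA k n P :=
  Algebra.subset_adjoin (Set.mem_insert_of_mem _ (Set.mem_insert_of_mem _
    (Set.mem_insert_of_mem _ (Set.mem_insert _ _))))
lemma uv_mem_AA : uv k n P ∈ AA k n P :=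
  Algebra.subset_adjoin (Set.mem_insert_of_mem _ (Set.mem_insert_of_mem _
    (Set.mem_insert_of_mem _ (Set.mem_insert_of_mem _ rfl))))

lemma aeval_mem (S : Subalgebra k (K4 k)) (v : Fin 2 → K4 k) (hv : ∀ i, v i ∈ S)
    (Q : MvPolynomial (Fin 2) k) : aeval v Q ∈ S := by
  induction Q using MvPolynomial.induction_on with
  | C a => simpa using S.algebraMap_mem a
  | add p q hp hq => rw [map_add]; exact add_mem hp hq
  | mul_X p i hp => rw [map_mul, aeval_X]; exact mul_mem hp (hv i)

lemma ιC_mem_AA (s : S0 k) : ιC k s ∈ AA k n P := by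
  induction s using MvPolynomial.induction_on with
  | C a => simpa using (AA k n P).algebraMap_mem a
  | add p q hp hq => rw [map_add]; exact add_mem hp hq
  | mul_X p i hp =>
    rw [map_mul]
    refine mul_mem hp ?_
    fin_cases i
    · show ιC k (X 0) ∈ AA k n P
      rw [ιC_apply, ιT_C0]; exact bv_mem_AA
    · show ιC k (X 1) ∈ AA k n P
      rw [ιC_apply, ιT_C1]; exact xv_mem_AA
    · show ιC k (X 2) ∈ AA k n P
      rw [ιC_apply, ιT_C2]; exact yv_mem_AA

lemma ιT_mem_AA (t : T k) : ιT k t ∈ AA k n P := by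
  induction t using Polynomial.induction_on' with
  | add p q hp hq => rw [map_add]; exact add_mem hp hq
  | monomial e s =>
    rw [← Polynomial.C_mul_X_pow_eq_monomial, map_mul, map_pow, ιT_X, ← ιC_apply]
    exact mul_mem (ιC_mem_AA _) (pow_mem av_mem_AA e)

variable (k n P) in
def WA (w : K4 k) : Prop :=
  ∃ (d : ℕ) (g : T k), g ∈ (II k n P) ^ d ∧ (av k) ^ d * w = ιT k g

lemma WA_shift {w : K4 k} (e : ℕ) {d : ℕ} {g : T k} (hg : g ∈ (II k n P) ^ d)
    (he : (av k) ^ d * w = ιT k g) :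
    (av k) ^ (e + d) * w = ιT k (Polynomial.X ^ e * g) ∧
      Polynomial.X ^ e * g ∈ (II k n P) ^ (e + d) := by
  constructor
  · rw [map_mul, map_pow, ιT_X, ← he, pow_add]; ring
  · have := Ideal.mul_mem_mul (Ideal.pow_mem_pow (X_mem_II (k:=k) (n:=n) (P:=P)) e) hg
    rwa [← pow_add (M := Ideal (T k))] at this

lemma WA_of_mem_AA {w : K4 k} (hw : w ∈ AA k n P) : WA k n P w := by
  refine Algebra.adjoin_induction (fun x hx => ?_) (fun r => ?_)
    (fun x y _ _ hx hy => ?_) (fun x y _ _ hx hy => ?_) hw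
  · -- generators
    have h0 : ∀ t : T k, ιT k t = x → WA k n P x := by
      rintro t ht
      exact ⟨0, t, by simpa using Submodule.mem_top, by simpa using ht.symm⟩
    rcases hx with rfl | rfl | rfl | rfl | rfl
    · exact h0 _ ιT_X
    · exact h0 _ ιT_C0
    · exact h0 _ ιT_C1
    · exact h0 _ ιT_C2
    · refine ⟨1, Polynomial.C (q0 k n P), by simpa using Cq0_mem_II, ?_⟩
      rw [pow_one]; exact av_uv
  · exact ⟨0, algebraMap k (T k) r, by simpa using Submodule.mem_top, by
      rw [pow_zero, one_mul]; exact ((ιT k).commutes r).symm⟩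
  · obtain ⟨d₁, g₁, hg₁, he₁⟩ := hx
    obtain ⟨d₂, g₂, hg₂, he₂⟩ := hy
    obtain ⟨he₁', hg₁'⟩ := WA_shift d₂ hg₁ he₁
    obtain ⟨he₂', hg₂'⟩ := WA_shift d₁ hg₂ he₂
    have he₂'' : av k ^ (d₂ + d₁) * y = ιT k (Polynomial.X ^ d₁ * g₂) := by
      rw [add_comm d₂ d₁]; exact he₂'
    have hg₂'' : Polynomial.X ^ d₁ * g₂ ∈ II k n P ^ (d₂ + d₁) := by
      rw [add_comm d₂ d₁]; exact hg₂'
    refine ⟨d₂ + d₁, Polynomial.X ^ d₂ * g₁ + Polynomial.X ^ d₁ * g₂, add_mem hg₁' hg₂'', ?_⟩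
    rw [map_add, mul_add, he₁', he₂'']
  · obtain ⟨d₁, g₁, hg₁, he₁⟩ := hx
    obtain ⟨d₂, g₂, hg₂, he₂⟩ := hy
    refine ⟨d₁ + d₂, g₁ * g₂, ?_, ?_⟩
    · have := Ideal.mul_mem_mul hg₁ hg₂
      rwa [← pow_add (M := Ideal (T k))] at this
    · rw [map_mul, ← he₁, ← he₂, pow_add]; ring

lemma mem_AA_of_ιT_inv {d : ℕ} {g : T k} (hg : g ∈ (II k n P) ^ d) :
    ιT k g * ((av k)⁻¹) ^ d ∈ AA k n P := by
  induction d generalizing g with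
  | zero => simpa using ιT_mem_AA g
  | succ d ih =>
    rw [pow_succ (M := Ideal (T k))] at hg
    refine Submodule.mul_induction_on hg (fun p hp s hs => ?_) (fun x y hx hy => ?_)
    · obtain ⟨r₁, r₂, rfl⟩ := Ideal.mem_span_pair.mp hs
      have key : ιT k (p * (r₁ * Polynomial.X + r₂ * Polynomial.C (q0 k n P)))
            * ((av k)⁻¹) ^ (d + 1)
          = (ιT k p * ((av k)⁻¹) ^ d)
            * (ιT k r₁ * (av k * (av k)⁻¹) + ιT k r₂ * (ιT k (Polynomial.C (q0 k n P)) * (av k)⁻¹)) := by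
        rw [map_mul, map_add, map_mul, map_mul, ιT_X, pow_succ]
        ring
      rw [key, mul_inv_cancel₀ av_ne]
      have huv : ιT k (Polynomial.C (q0 k n P)) * (av k)⁻¹ = uv k n P := by
        rw [← av_uv]
        exact mul_div_cancel_left₀ (uv k n P) av_ne
      rw [huv]
      exact mul_mem (ih hp) (add_mem (by simpa using ιT_mem_AA r₁)
        (mul_mem (ιT_mem_AA r₂) uv_mem_AA))
    · have : ιT k (x + y) * ((av k)⁻¹) ^ (d+1)
          = ιT k x * ((av k)⁻¹) ^ (d+1) + ιT k y * ((av k)⁻¹) ^ (d+1) := by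
        rw [map_add]; ring
      rw [this]; exact add_mem hx hy

lemma mem_AA_of_WA {w : K4 k} (hw : WA k n P w) : w ∈ AA k n P := by
  obtain ⟨d, g, hg, he⟩ := hw
  have hw' : w = ιT k g * ((av k)⁻¹) ^ d := by
    rw [← he, mul_comm (av k ^ d) w, mul_assoc, inv_pow,
      mul_inv_cancel₀ (pow_ne_zero d av_ne), mul_one]
  rw [hw']
  exact mem_AA_of_ιT_inv hg

lemma L1_loc {z : K4 k} (hz : z ∈ Algebra.adjoin k {av k, (av k)⁻¹, bv k, xv k, yv k}) :
    ∃ m, (av k) ^ m * z ∈ (ιT k).range := by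
  have hav : av k ∈ (ιT k).range := ⟨Polynomial.X, ιT_X⟩
  refine Algebra.adjoin_induction (fun x hx => ?_) (fun r => ?_) (fun x y _ _ hx hy => ?_)
    (fun x y _ _ hx hy => ?_) hz
  · rcases hx with rfl | rfl | rfl | rfl | rfl
    · exact ⟨0, by rw [pow_zero, one_mul]; exact hav⟩
    · refine ⟨1, ?_⟩
      rw [pow_one, mul_inv_cancel₀ av_ne]
      exact one_mem _
    · exact ⟨0, by rw [pow_zero, one_mul]; exact ⟨_, ιT_C0⟩⟩
    · exact ⟨0, by rw [pow_zero, one_mul]; exact ⟨_, ιT_C1⟩⟩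
    · exact ⟨0, by rw [pow_zero, one_mul]; exact ⟨_, ιT_C2⟩⟩
  · exact ⟨0, by rw [pow_zero, one_mul]; exact Subalgebra.algebraMap_mem _ r⟩
  · obtain ⟨m₁, h₁⟩ := hx
    obtain ⟨m₂, h₂⟩ := hy
    refine ⟨m₁ + m₂, ?_⟩
    have key : av k ^ (m₁ + m₂) * (x + y)
        = av k ^ m₂ * (av k ^ m₁ * x) + av k ^ m₁ * (av k ^ m₂ * y) := by
      rw [pow_add]; ring
    rw [key]
    exact add_mem (mul_mem (pow_mem hav m₂) h₁) (mul_mem (pow_mem hav m₁) h₂)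
  · obtain ⟨m₁, h₁⟩ := hx
    obtain ⟨m₂, h₂⟩ := hy
    refine ⟨m₁ + m₂, ?_⟩
    have key : av k ^ (m₁ + m₂) * (x * y)
        = (av k ^ m₁ * x) * (av k ^ m₂ * y) := by
      rw [pow_add]; ring
    rw [key]
    exact mul_mem h₁ h₂

lemma L2_loc {z : K4 k}
    (hz : z ∈ Algebra.adjoin k {av k, bv k, (bv k)⁻¹, xv k, uv k n P}) :
    ∃ r, (bv k) ^ r * z ∈ AA k n P := by
  refine Algebra.adjoin_induction (fun x hx => ?_) (fun r => ?_) (fun x y _ _ hx hy => ?_)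
    (fun x y _ _ hx hy => ?_) hz
  · rcases hx with rfl | rfl | rfl | rfl | rfl
    · exact ⟨0, by rw [pow_zero, one_mul]; exact av_mem_AA⟩
    · exact ⟨0, by rw [pow_zero, one_mul]; exact bv_mem_AA⟩
    · refine ⟨1, ?_⟩
      rw [pow_one, mul_inv_cancel₀ bv_ne]
      exact one_mem _
    · exact ⟨0, by rw [pow_zero, one_mul]; exact xv_mem_AA⟩
    · exact ⟨0, by rw [pow_zero, one_mul]; exact uv_mem_AA⟩
  · exact ⟨0, by rw [pow_zero, one_mul]; exact Subalgebra.algebraMap_mem _ r⟩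
  · obtain ⟨m₁, h₁⟩ := hx
    obtain ⟨m₂, h₂⟩ := hy
    refine ⟨m₁ + m₂, ?_⟩
    have key : bv k ^ (m₁ + m₂) * (x + y)
        = bv k ^ m₂ * (bv k ^ m₁ * x) + bv k ^ m₁ * (bv k ^ m₂ * y) := by
      rw [pow_add]; ring
    rw [key]
    exact add_mem (mul_mem (pow_mem bv_mem_AA m₂) h₁) (mul_mem (pow_mem bv_mem_AA m₁) h₂)
  · obtain ⟨m₁, h₁⟩ := hx
    obtain ⟨m₂, h₂⟩ := hy
    refine ⟨m₁ + m₂, ?_⟩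
    have key : bv k ^ (m₁ + m₂) * (x * y)
        = (bv k ^ m₁ * x) * (bv k ^ m₂ * y) := by
      rw [pow_add]; ring
    rw [key]
    exact mul_mem h₁ h₂

lemma desc {w : K4 k} (hn : 1 ≤ n)
    (hP : (MvPolynomial.aeval ![0, Polynomial.X] P : Polynomial k) ≠ 0)
    (h1 : WA k n P (bv k * w))
    (h2 : ∃ m t, (av k) ^ m * w = ιT k t) : WA k n P w := by
  obtain ⟨d, g, hgI, hge⟩ := h1
  obtain ⟨m, t, ht⟩ := h2
  have hkey : Polynomial.X ^ m * g = Polynomial.X ^ d * (Polynomial.C (X 0) * t) := by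
    apply ιT_inj
    rw [map_mul, map_mul, map_mul, map_pow, map_pow, ιT_X, ιT_C0, ← hge, ← ht]
    ring
  have h0 : g.map (φb k).toRingHom = 0 := by
    have hm := congrArg (Polynomial.map (φb k).toRingHom) hkey
    rw [Polynomial.map_mul, Polynomial.map_mul, Polynomial.map_mul, Polynomial.map_pow,
      Polynomial.map_pow, Polynomial.map_X, Polynomial.map_C,
      show (φb k).toRingHom (X 0 : S0 k) = 0 from φb_X0, Polynomial.C_0, zero_mul,
      mul_zero] at hm
    exact (mul_eq_zero.mp hm).resolve_left (pow_ne_zero _ Polynomial.X_ne_zero)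
  obtain ⟨g', hfac, hJ'⟩ := claim2 hn hP (Jmem_of_mem_pow hgI) h0
  refine ⟨d, g', mem_pow_of_Jmem hJ', ?_⟩
  have hc : bv k * (av k ^ d * w) = bv k * ιT k g' := by
    rw [show bv k * (av k ^ d * w) = av k ^ d * (bv k * w) by ring, hge, hfac, map_mul, ιT_C0]
  exact mul_left_cancel₀ bv_ne hc

lemma descend (hn : 1 ≤ n)
    (hP : (MvPolynomial.aeval ![0, Polynomial.X] P : Polynomial k) ≠ 0) :
    ∀ (r : ℕ) (w : K4 k), WA k n P ((bv k) ^ r * w) →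
      (∃ m t, (av k) ^ m * w = ιT k t) → WA k n P w := by
  intro r
  induction r with
  | zero =>
    intro w hw _
    rwa [pow_zero, one_mul] at hw
  | succ r ih =>
    intro w hw hm
    obtain ⟨m, t, ht⟩ := hm
    have hw' : WA k n P ((bv k) ^ r * (bv k * w)) := by
      rw [show (bv k) ^ r * (bv k * w) = (bv k) ^ (r + 1) * w by rw [pow_succ]; ring]
      exact hw
    have hm' : ∃ m' t', (av k) ^ m' * (bv k * w) = ιT k t' := by
      refine ⟨m, Polynomial.C (X 0) * t, ?_⟩
      rw [map_mul, ιT_C0, ← ht]; ring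
    exact desc hn hP (ih (bv k * w) hw' hm') ⟨m, t, ht⟩

end Stmt14

open Stmt14

/-- let `P ∈ k[b,x]` with `P(0,x) ≠ 0` (i.e. `P ∉ b·k[b,x]`), `n ≥ 1`,
and set `u = (bⁿy + P)/a ∈ k[a^{±1},b][x,y]`.  Then, inside `k(a,b,x,y)`,
`k[a^{±1},b][x,y] ∩ k[a,b^{±1}][x,u] = k[a,b,x,y,u]`. -/
theorem stmt14 (k : Type) [Field k] (n : ℕ) (hn : 1 ≤ n)
    (P : MvPolynomial (Fin 2) k)
    (hP : (MvPolynomial.aeval ![0, Polynomial.X] P : Polynomial k) ≠ 0) :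
    Algebra.adjoin k ({av k, (av k)⁻¹, bv k, xv k, yv k} : Set (K4 k))
        ⊓ Algebra.adjoin k ({av k, bv k, (bv k)⁻¹, xv k,
            ((bv k) ^ n * yv k + MvPolynomial.aeval ![bv k, xv k] P) / av k} : Set (K4 k))
      = Algebra.adjoin k ({av k, bv k, xv k, yv k,
          ((bv k) ^ n * yv k + MvPolynomial.aeval ![bv k, xv k] P) / av k} : Set (K4 k)) := by
  have huv : ((bv k) ^ n * yv k + MvPolynomial.aeval ![bv k, xv k] P) / av k = uv k n P := rfl
  rw [huv]
  apply le_antisymm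
  · intro z hz
    rw [Algebra.mem_inf] at hz
    obtain ⟨hz1, hz2⟩ := hz
    obtain ⟨m, t, ht⟩ := L1_loc hz1
    obtain ⟨r, hr⟩ := L2_loc hz2
    exact mem_AA_of_WA (descend hn hP r z (WA_of_mem_AA hr) ⟨m, t, ht.symm⟩)
  · apply le_inf
    · rw [Algebra.adjoin_le_iff]
      intro x hx
      have hav : av k ∈ Algebra.adjoin k {av k, (av k)⁻¹, bv k, xv k, yv k} :=
        Algebra.subset_adjoin (Set.mem_insert _ _)
      have hainv : (av k)⁻¹ ∈ Algebra.adjoin k {av k, (av k)⁻¹, bv k, xv k, yv k} :=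
        Algebra.subset_adjoin (Set.mem_insert_of_mem _ (Set.mem_insert _ _))
      have hbv : bv k ∈ Algebra.adjoin k {av k, (av k)⁻¹, bv k, xv k, yv k} :=
        Algebra.subset_adjoin (Set.mem_insert_of_mem _ (Set.mem_insert_of_mem _
          (Set.mem_insert _ _)))
      have hxv : xv k ∈ Algebra.adjoin k {av k, (av k)⁻¹, bv k, xv k, yv k} :=
        Algebra.subset_adjoin (Set.mem_insert_of_mem _ (Set.mem_insert_of_mem _
          (Set.mem_insert_of_mem _ (Set.mem_insert _ _))))
      have hyv : yv k ∈ Algebra.adjoin k {av k, (av k)⁻¹, bv k, xv k, yv k} :=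
        Algebra.subset_adjoin (Set.mem_insert_of_mem _ (Set.mem_insert_of_mem _
          (Set.mem_insert_of_mem _ (Set.mem_insert_of_mem _ rfl))))
      rcases hx with rfl | rfl | rfl | rfl | rfl
      · exact hav
      · exact hbv
      · exact hxv
      · exact hyv
      · rw [show uv k n P = ((bv k) ^ n * yv k + MvPolynomial.aeval ![bv k, xv k] P) * (av k)⁻¹
            from div_eq_mul_inv _ _]
        exact mul_mem (add_mem (mul_mem (pow_mem hbv n) hyv)
          (aeval_mem _ ![bv k, xv k] (fun i => by fin_cases i <;> assumption) P)) hainv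
    · rw [Algebra.adjoin_le_iff]
      intro x hx
      set L2 := Algebra.adjoin k {av k, bv k, (bv k)⁻¹, xv k, uv k n P} with hL2
      have hav : av k ∈ L2 := Algebra.subset_adjoin (Set.mem_insert _ _)
      have hbv : bv k ∈ L2 :=
        Algebra.subset_adjoin (Set.mem_insert_of_mem _ (Set.mem_insert _ _))
      have hbinv : (bv k)⁻¹ ∈ L2 :=
        Algebra.subset_adjoin (Set.mem_insert_of_mem _ (Set.mem_insert_of_mem _
          (Set.mem_insert _ _)))
      have hxv : xv k ∈ L2 :=
        Algebra.subset_adjoin (Set.mem_insert_of_mem _ (Set.mem_insert_of_mem _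
          (Set.mem_insert_of_mem _ (Set.mem_insert _ _))))
      have huv2 : uv k n P ∈ L2 :=
        Algebra.subset_adjoin (Set.mem_insert_of_mem _ (Set.mem_insert_of_mem _
          (Set.mem_insert_of_mem _ (Set.mem_insert_of_mem _ rfl))))
      rcases hx with rfl | rfl | rfl | rfl | rfl
      · exact hav
      · exact hbv
      · exact hxv
      · -- yv
        have hid : yv k
            = ((bv k)⁻¹) ^ n * (av k * uv k n P - MvPolynomial.aeval ![bv k, xv k] P) := by
          rw [av_uv, ιT_Cq0, add_sub_cancel_right, inv_pow, ← mul_assoc,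
            inv_mul_cancel₀ (pow_ne_zero n bv_ne), one_mul]
        rw [hid]
        exact mul_mem (pow_mem hbinv n) (sub_mem (mul_mem hav huv2)
          (aeval_mem _ ![bv k, xv k] (fun i => by fin_cases i <;> assumption) P))
      · exact huv2
end
end

section
/- Let R be a commutative ring, a ∈ R a non-zero-divisor, m ≥ 1, f, Q ∈ R[X], and let g ∈ R[X] satisfy f(x) ≡ g(x + aQ(f(x))) (mod aᵐ) in R[x]. Define v = x + aQ(aᵐy + f(x)) and v̂ = x − aQ(aᵐy + g(x)) in R[x,y]. Then the R-algebra endomorphisms φ, ψ of R[x,y] given by φ(x) = v, φ(y) = y + (f(x) − g(v))/aᵐ and ψ(x) = v̂, ψ(y) = y + (g(x) − f(v̂))/aᵐ are mutually inverse R-algebra automorphisms (in particular f(x) − g(v) and g(x) − f(v̂) are divisible by aᵐ). -/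
noncomputable section
open MvPolynomial

lemma aeval_sub_mem {R S : Type} [CommRing R] [CommRing S] [Algebra R S]
    (I : Ideal S) (p : Polynomial R) {u u' : S} (h : u - u' ∈ I) :
    Polynomial.aeval u p - Polynomial.aeval u' p ∈ I := by
  rw [← Ideal.Quotient.eq] at h ⊢
  have h2 : (Ideal.Quotient.mkₐ R I) u = (Ideal.Quotient.mkₐ R I) u' := h
  calc Ideal.Quotient.mk I (Polynomial.aeval u p)
      = Polynomial.aeval ((Ideal.Quotient.mkₐ R I) u) p :=
        (Polynomial.aeval_algHom_apply (Ideal.Quotient.mkₐ R I) u p).symm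
    _ = Polynomial.aeval ((Ideal.Quotient.mkₐ R I) u') p := by rw [h2]
    _ = Ideal.Quotient.mk I (Polynomial.aeval u' p) :=
        Polynomial.aeval_algHom_apply (Ideal.Quotient.mkₐ R I) u' p

lemma C_mem_nzd {R : Type} [CommRing R] {a : R} (ha : a ∈ nonZeroDivisors R) (σ : Type) :
    (MvPolynomial.C a : MvPolynomial σ R) ∈ nonZeroDivisors (MvPolynomial σ R) := by
  rw [mem_nonZeroDivisors_iff_right] at ha ⊢
  intro p hp
  ext s
  have h0 : MvPolynomial.C a * p = 0 := by rw [mul_comm]; exact hp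
  have h1 := congrArg (MvPolynomial.coeff s) h0
  rw [coeff_C_mul, coeff_zero] at h1
  rw [mul_comm] at h1
  simpa using ha _ h1

set_option maxHeartbeats 1000000 in
/-- let `R` be a commutative ring, `a` a non-zero-divisor, `m ≥ 1`,
`f, Q, g ∈ R[X]` with `f(x) ≡ g(x + aQ(f(x))) (mod aᵐ)` in `R[x]`.  With
`v = x + aQ(aᵐy + f(x))` and `v̂ = x − aQ(aᵐy + g(x))` in `R[x,y] = MvPolynomial (Fin 2) R`
(where `x = X 0`, `y = X 1`), there are mutually inverse `R`-algebra endomorphisms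
`φ, ψ` of `R[x,y]` with `φ(x) = v`, `aᵐ·(φ(y) − y) = f(x) − g(v)` (so `f(x) − g(v)` is
divisible by `aᵐ` and `φ(y) = y + (f(x) − g(v))/aᵐ`), `ψ(x) = v̂` and
`aᵐ·(ψ(y) − y) = g(x) − f(v̂)`. -/
theorem stmt19 (R : Type) [CommRing R] (m : ℕ) (hm : 1 ≤ m)
    (a : R) (ha : a ∈ nonZeroDivisors R) (f Q g : Polynomial R)
    (hfg : f - g.comp (Polynomial.X + Polynomial.C a * Q.comp f)
      ∈ Ideal.span {(Polynomial.C a) ^ m}) :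
    ∃ φ ψ : MvPolynomial (Fin 2) R →ₐ[R] MvPolynomial (Fin 2) R,
      φ (X 0) = X 0 + C a * Polynomial.aeval
        ((C a) ^ m * X 1 + Polynomial.aeval (X 0 : MvPolynomial (Fin 2) R) f) Q ∧
      (C a) ^ m * (φ (X 1) - X 1)
        = Polynomial.aeval (X 0 : MvPolynomial (Fin 2) R) f
          - Polynomial.aeval (X 0 + C a * Polynomial.aeval
              ((C a) ^ m * X 1 + Polynomial.aeval (X 0 : MvPolynomial (Fin 2) R) f) Q) g ∧
      ψ (X 0) = X 0 - C a * Polynomial.aeval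
        ((C a) ^ m * X 1 + Polynomial.aeval (X 0 : MvPolynomial (Fin 2) R) g) Q ∧
      (C a) ^ m * (ψ (X 1) - X 1)
        = Polynomial.aeval (X 0 : MvPolynomial (Fin 2) R) g
          - Polynomial.aeval (X 0 - C a * Polynomial.aeval
              ((C a) ^ m * X 1 + Polynomial.aeval (X 0 : MvPolynomial (Fin 2) R) g) Q) f ∧
      φ.comp ψ = AlgHom.id R (MvPolynomial (Fin 2) R) ∧
      ψ.comp φ = AlgHom.id R (MvPolynomial (Fin 2) R) := by

  classical
  set x : MvPolynomial (Fin 2) R := X 0 with hx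
  set y : MvPolynomial (Fin 2) R := X 1 with hy
  set A : MvPolynomial (Fin 2) R := (C a) ^ m with hA
  set F : MvPolynomial (Fin 2) R := Polynomial.aeval x f with hF
  set G : MvPolynomial (Fin 2) R := Polynomial.aeval x g with hG
  set v : MvPolynomial (Fin 2) R := x + C a * Polynomial.aeval (A * y + F) Q with hv
  set vb : MvPolynomial (Fin 2) R := x - C a * Polynomial.aeval (A * y + G) Q with hvb
  have hAnzd : A ∈ nonZeroDivisors (MvPolynomial (Fin 2) R) := by
    rw [hA]; exact pow_mem (C_mem_nzd ha _) m
  -- the hypothesis, evaluated at an arbitrary point t of R[x,y]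
  have key : ∀ t : MvPolynomial (Fin 2) R,
      Polynomial.aeval t f
        - Polynomial.aeval (t + C a * Polynomial.aeval (Polynomial.aeval t f) Q) g
        ∈ Ideal.span {A} := by
    obtain ⟨h, hh⟩ := Ideal.mem_span_singleton.mp hfg
    intro t
    have h2 := congrArg (Polynomial.aeval t) hh
    simp only [map_sub, Polynomial.aeval_comp, map_mul, map_pow, Polynomial.aeval_C,
      map_add, Polynomial.aeval_X, MvPolynomial.algebraMap_eq] at h2
    rw [Ideal.mem_span_singleton]
    exact ⟨Polynomial.aeval t h, by rw [h2, hA]⟩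
  -- Step A : F - g(v) ∈ (A)
  have hA1 : F - Polynomial.aeval v g ∈ Ideal.span {A} := by
    have k1 := key x
    have k2 : v - (x + C a * Polynomial.aeval F Q) ∈ Ideal.span {A} := by
      have d0 : (A * y + F) - F ∈ Ideal.span {A} := by
        have heq0 : (A * y + F) - F = A * y := by ring
        rw [heq0]
        exact Ideal.mul_mem_right y _ (Ideal.mem_span_singleton_self A)
      have d1 := aeval_sub_mem (Ideal.span {A}) Q d0
      have d2 : C a * (Polynomial.aeval (A * y + F) Q - Polynomial.aeval F Q)
          ∈ Ideal.span {A} := Ideal.mul_mem_left _ _ d1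
      have heq : v - (x + C a * Polynomial.aeval F Q)
          = C a * (Polynomial.aeval (A * y + F) Q - Polynomial.aeval F Q) := by
        rw [hv]; ring
      rwa [heq]
    have k3 := aeval_sub_mem (Ideal.span {A}) g k2
    have heq : F - Polynomial.aeval v g
        = (F - Polynomial.aeval (x + C a * Polynomial.aeval F Q) g)
          - (Polynomial.aeval v g - Polynomial.aeval (x + C a * Polynomial.aeval F Q) g) := by
      ring
    rw [heq]
    exact Ideal.sub_mem _ k1 k3
  -- Step B : induction, G - f(x - aQ(G)) ∈ (aᵏ) for k ≤ m
  set t : MvPolynomial (Fin 2) R := x - C a * Polynomial.aeval G Q with ht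
  have hB0 : ∀ k, k ≤ m →
      G - Polynomial.aeval t f ∈ Ideal.span {(C a : MvPolynomial (Fin 2) R) ^ k} := by
    intro k
    induction k with
    | zero =>
      intro _
      rw [pow_zero]
      exact Ideal.mem_span_singleton.mpr (one_dvd _)
    | succ k ih =>
      intro hk
      have ihk := ih (Nat.le_of_succ_le hk)
      have k1 : Polynomial.aeval t f
          - Polynomial.aeval (t + C a * Polynomial.aeval (Polynomial.aeval t f) Q) g
          ∈ Ideal.span {(C a : MvPolynomial (Fin 2) R) ^ (k + 1)} := by
        refine Ideal.span_singleton_le_span_singleton.mpr (pow_dvd_pow _ hk) ?_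
        have := key t
        rwa [hA] at this
      have k2 : (t + C a * Polynomial.aeval (Polynomial.aeval t f) Q) - x
          ∈ Ideal.span {(C a : MvPolynomial (Fin 2) R) ^ (k + 1)} := by
        have d1 : Polynomial.aeval t f - G
            ∈ Ideal.span {(C a : MvPolynomial (Fin 2) R) ^ k} := by
          have := neg_mem ihk
          simpa using this
        have d2 := aeval_sub_mem (Ideal.span {(C a : MvPolynomial (Fin 2) R) ^ k}) Q d1
        obtain ⟨c, hc⟩ := Ideal.mem_span_singleton.mp d2
        rw [Ideal.mem_span_singleton]
        refine ⟨c, ?_⟩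
        have heq : (t + C a * Polynomial.aeval (Polynomial.aeval t f) Q) - x
            = C a * (Polynomial.aeval (Polynomial.aeval t f) Q - Polynomial.aeval G Q) := by
          rw [ht]; ring
        rw [heq, hc, pow_succ]; ring
      have k3 := aeval_sub_mem
        (Ideal.span {(C a : MvPolynomial (Fin 2) R) ^ (k + 1)}) g k2
      have heq : G - Polynomial.aeval t f
          = -((Polynomial.aeval t f
              - Polynomial.aeval (t + C a * Polynomial.aeval (Polynomial.aeval t f) Q) g)
            + (Polynomial.aeval (t + C a * Polynomial.aeval (Polynomial.aeval t f) Q) g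
              - Polynomial.aeval x g)) := by
        rw [hG]; ring
      rw [heq]
      exact neg_mem (Ideal.add_mem _ k1 k3)
  have hB1 : G - Polynomial.aeval vb f ∈ Ideal.span {A} := by
    have b0 := hB0 m le_rfl
    rw [← hA] at b0
    have k2 : vb - t ∈ Ideal.span {A} := by
      have d0 : (A * y + G) - G ∈ Ideal.span {A} := by
        have heq0 : (A * y + G) - G = A * y := by ring
        rw [heq0]
        exact Ideal.mul_mem_right y _ (Ideal.mem_span_singleton_self A)
      have d1 := aeval_sub_mem (Ideal.span {A}) Q d0
      have d2 : -(C a * (Polynomial.aeval (A * y + G) Q - Polynomial.aeval G Q))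
          ∈ Ideal.span {A} := neg_mem (Ideal.mul_mem_left _ _ d1)
      have heq : vb - t
          = -(C a * (Polynomial.aeval (A * y + G) Q - Polynomial.aeval G Q)) := by
        rw [hvb, ht]; ring
      rwa [heq]
    have k3 := aeval_sub_mem (Ideal.span {A}) f k2
    have heq : G - Polynomial.aeval vb f
        = (G - Polynomial.aeval t f)
          - (Polynomial.aeval vb f - Polynomial.aeval t f) := by ring
    rw [heq]
    exact Ideal.sub_mem _ b0 k3
  obtain ⟨e, he⟩ := Ideal.mem_span_singleton.mp hA1
  obtain ⟨e', he'⟩ := Ideal.mem_span_singleton.mp hB1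
  set φ : MvPolynomial (Fin 2) R →ₐ[R] MvPolynomial (Fin 2) R :=
    MvPolynomial.aeval ![v, y + e] with hφdef
  set ψ : MvPolynomial (Fin 2) R →ₐ[R] MvPolynomial (Fin 2) R :=
    MvPolynomial.aeval ![vb, y + e'] with hψdef
  have hφx : φ x = v := by rw [hφdef, hx]; simp
  have hφy : φ y = y + e := by rw [hφdef, hy]; simp
  have hψx : ψ x = vb := by rw [hψdef, hx]; simp
  have hψy : ψ y = y + e' := by rw [hψdef, hy]; simp
  have hφCa : φ (C a) = C a := by rw [hφdef]; simp [MvPolynomial.algebraMap_eq]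
  have hψCa : ψ (C a) = C a := by rw [hψdef]; simp [MvPolynomial.algebraMap_eq]
  have hφae : ∀ (p : Polynomial R) (u : MvPolynomial (Fin 2) R),
      φ (Polynomial.aeval u p) = Polynomial.aeval (φ u) p :=
    fun p u => (Polynomial.aeval_algHom_apply φ u p).symm
  have hψae : ∀ (p : Polynomial R) (u : MvPolynomial (Fin 2) R),
      ψ (Polynomial.aeval u p) = Polynomial.aeval (ψ u) p :=
    fun p u => (Polynomial.aeval_algHom_apply ψ u p).symm
  have hφA : φ A = A := by rw [hA, map_pow, hφCa]
  have hψA : ψ A = A := by rw [hA, map_pow, hψCa]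
  have hφarg : φ (A * y + G) = A * y + F := by
    rw [map_add, map_mul, hφA, hφy, hG, hφae, hφx]
    linear_combination -he
  have hψarg : ψ (A * y + F) = A * y + G := by
    rw [map_add, map_mul, hψA, hψy, hF, hψae, hψx]
    linear_combination -he'
  have hφvb : φ vb = x := by
    rw [hvb, map_sub, map_mul, hφx, hφCa, hφae, hφarg, hv]
    ring
  have hψv : ψ v = x := by
    rw [hv, map_add, map_mul, hψx, hψCa, hψae, hψarg, hvb]
    ring
  have hφe' : φ e' = -e := by
    refine (mul_cancel_left_mem_nonZeroDivisors hAnzd).mp ?_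
    calc A * φ e' = φ (A * e') := by rw [map_mul, hφA]
      _ = φ G - φ (Polynomial.aeval vb f) := by rw [← he', map_sub]
      _ = Polynomial.aeval v g - Polynomial.aeval x f := by
          rw [hG, hφae, hφx, hφae, hφvb]
      _ = A * (-e) := by rw [← hF]; linear_combination -he
  have hψe : ψ e = -e' := by
    refine (mul_cancel_left_mem_nonZeroDivisors hAnzd).mp ?_
    calc A * ψ e = ψ (A * e) := by rw [map_mul, hψA]
      _ = ψ F - ψ (Polynomial.aeval v g) := by rw [← he, map_sub]
      _ = Polynomial.aeval vb f - Polynomial.aeval x g := by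
          rw [hF, hψae, hψx, hψae, hψv]
      _ = A * (-e') := by rw [← hG]; linear_combination -he'
  refine ⟨φ, ψ, hφx, ?_, hψx, ?_, ?_, ?_⟩
  · rw [hφy]; linear_combination -he
  · rw [hψy]; linear_combination -he'
  · apply MvPolynomial.algHom_ext
    intro i
    fin_cases i
    · show φ (ψ x) = x
      rw [hψx, hφvb]
    · show φ (ψ y) = y
      rw [hψy, map_add, hφy, hφe']
      ring
  · apply MvPolynomial.algHom_ext
    intro i
    fin_cases i
    · show ψ (φ x) = x
      rw [hφx, hψv]
    · show ψ (φ y) = y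
      rw [hφy, map_add, hψy, hψe]
      ring
end
end
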